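/- arXiv:2010.06226 — 9 statements merged into one kernel-verified Lean document; each statement's English description precedes it below -/
import Mathlib

section
/- Let a, c, K_W be real numbers with c ≠ a, K_W > 0 and |a| < 1, and let (Σ_t)_{t≥1} satisfy the ARMA(a,c) difference Riccati recursion with an arbitrary initial condition Σ_1 ≥ 0. Then Σ_n converges to 0 as n → ∞, where 0 is the unique nonnegative stabilizing solution of the corresponding algebraic Riccati equation. -/
/-!
Clearing the denominator, the Riccati map collapses to `R(Σ) = a² K_W Σ / (K_W + (c-a)² Σ)`,
so `0 ≤ R(Σ) ≤ a² Σ` for `Σ ≥ 0`. Hence the iterates decay at least geometrically with ratio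
`a² < 1`, and a nonnegative fixed point satisfies `Σ ≤ a² Σ`, forcing `Σ = 0`. At `Σ = 0` the
gain is `1` and the closed-loop coefficient is `a`.
-/

open Filter Topology

theorem tendsto_nhds_zero_of_le_mul {u : ℕ → ℝ} {r : ℝ} (hr₀ : 0 ≤ r) (hr₁ : r < 1)
    (hu₀ : ∀ n, 0 ≤ u n) (hu : ∀ n, u (n + 1) ≤ r * u n) : Tendsto u atTop (𝓝 0) := by
  have hgeom : Tendsto (fun n ↦ r ^ n * u 0) atTop (𝓝 0) := by
    simpa using (tendsto_pow_atTop_nhds_zero_of_lt_one hr₀ hr₁).mul_const (u 0)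
  exact tendsto_of_tendsto_of_tendsto_of_le_of_le tendsto_const_nhds hgeom hu₀
    fun n ↦ le_geom hr₀ n fun k _ ↦ hu k

namespace ARMARiccati

noncomputable def riccati (a c KW x : ℝ) : ℝ :=
  c ^ 2 * x + KW - (c * x * (c - a) + KW) ^ 2 / (KW + (c - a) ^ 2 * x)

variable {a c KW x : ℝ}

theorem riccati_eq (hden : KW + (c - a) ^ 2 * x ≠ 0) :
    riccati a c KW x = a ^ 2 * KW * x / (KW + (c - a) ^ 2 * x) := by
  rw [riccati, eq_div_iff hden, sub_mul, div_mul_cancel₀ _ hden]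
  ring

theorem riccati_nonneg (hKW : 0 < KW) (hx : 0 ≤ x) : 0 ≤ riccati a c KW x := by
  rw [riccati_eq (by positivity)]
  positivity

theorem riccati_le (hKW : 0 < KW) (hx : 0 ≤ x) : riccati a c KW x ≤ a ^ 2 * x := by
  have hden : 0 < KW + (c - a) ^ 2 * x := by positivity
  rw [riccati_eq hden.ne', div_le_iff₀ hden]
  have : 0 ≤ a ^ 2 * x * ((c - a) ^ 2 * x) := by positivity
  nlinarith

theorem eq_zero_of_riccati_eq_self (hKW : 0 < KW) (ha : a ^ 2 < 1) (hx : 0 ≤ x)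
    (hfix : x = riccati a c KW x) : x = 0 := by
  have : x ≤ a ^ 2 * x := hfix.trans_le (riccati_le hKW hx)
  nlinarith

end ARMARiccati

open ARMARiccati in
theorem stmt_3_general (a c KW : ℝ) (hKW : 0 < KW) (ha : |a| < 1)
    (Sig : ℕ → ℝ) (h0 : 0 ≤ Sig 0)
    (hrec : ∀ t, Sig (t + 1) =
      c ^ 2 * Sig t + KW - (c * Sig t * (c - a) + KW) ^ 2 / (KW + (c - a) ^ 2 * Sig t)) :
    Filter.Tendsto Sig Filter.atTop (nhds 0) ∧
    ((0 : ℝ) = c ^ 2 * 0 + KW - (c * 0 * (c - a) + KW) ^ 2 / (KW + (c - a) ^ 2 * 0) ∧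
      |c - (c * 0 * (c - a) + KW) / (KW + (c - a) ^ 2 * 0) * (c - a)| < 1) ∧
    (∀ S : ℝ, 0 ≤ S →
      S = c ^ 2 * S + KW - (c * S * (c - a) + KW) ^ 2 / (KW + (c - a) ^ 2 * S) →
      |c - (c * S * (c - a) + KW) / (KW + (c - a) ^ 2 * S) * (c - a)| < 1 →
      S = 0) := by
  have ha2 : a ^ 2 < 1 := (sq_lt_one_iff_abs_lt_one a).mpr ha
  have hnonneg : ∀ t, 0 ≤ Sig t := by
    intro t
    induction t with
    | zero => exact h0
    | succ t ih => exact (hrec t).trans_ge (riccati_nonneg hKW ih)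
  refine ⟨?_, ⟨?_, ?_⟩, fun S hS hfix _ ↦ eq_zero_of_riccati_eq_self hKW ha2 hS hfix⟩
  · exact tendsto_nhds_zero_of_le_mul (sq_nonneg a) ha2 hnonneg
      fun t ↦ (hrec t).trans_le (riccati_le hKW (hnonneg t))
  · field_simp
    ring
  · simpa [hKW.ne'] using ha

/-- for `|a| < 1`, the ARMA(a,c) difference Riccati recursion with arbitrary
nonnegative initial condition converges to `0`, where `0` is the unique nonnegative
stabilizing solution of the corresponding algebraic Riccati equation
(the gain is `M(Σ) = (cΣ(c-a)+K_W)/(K_W+(c-a)²Σ)` and the closed-loop coefficient is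
`M^{CL}(Σ) = c - M(Σ)(c-a)`; stabilizing means `|M^{CL}(Σ)| < 1`). -/
theorem stmt_3 (a c KW : ℝ) (hca : c ≠ a) (hKW : 0 < KW) (ha : |a| < 1)
    (Sig : ℕ → ℝ) (h0 : 0 ≤ Sig 0)
    (hrec : ∀ t, Sig (t + 1) =
      c ^ 2 * Sig t + KW - (c * Sig t * (c - a) + KW) ^ 2 / (KW + (c - a) ^ 2 * Sig t)) :
    Filter.Tendsto Sig Filter.atTop (nhds 0) ∧
    ((0 : ℝ) = c ^ 2 * 0 + KW - (c * 0 * (c - a) + KW) ^ 2 / (KW + (c - a) ^ 2 * 0) ∧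
      |c - (c * 0 * (c - a) + KW) / (KW + (c - a) ^ 2 * 0) * (c - a)| < 1) ∧
    (∀ S : ℝ, 0 ≤ S →
      S = c ^ 2 * S + KW - (c * S * (c - a) + KW) ^ 2 / (KW + (c - a) ^ 2 * S) →
      |c - (c * S * (c - a) + KW) / (KW + (c - a) ^ 2 * S) * (c - a)| < 1 →
      S = 0) :=
  stmt_3_general a c KW hKW ha Sig h0 hrec
end

section
/- Let a, c, K_W be real numbers with c ≠ a, K_W > 0 and |a| < 1, and let (Σ_t)_{t≥1} satisfy the ARMA(a,c) difference Riccati recursion with arbitrary initial condition Σ_1 ≥ 0. Then the entropy rate of the noise exists and equals the white-noise value: (1/n)·Σ_{t=1}^{n} (1/2)·log(2·π·e·[(c−a)²·Σ_t + K_W]) → (1/2)·log(2·π·e·K_W) as n → ∞. -/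
/-! For the ARMA Riccati map the identity `c² + (c - a)² - 2c(c - a) = a²` collapses one step to
`Σ ↦ a² K_W Σ / (K_W + (c - a)² Σ)`, which keeps `Σ ≥ 0` and contracts it by the factor `a² < 1`.
Hence `Σ_t → 0`, the per-step entropies converge to the white-noise value, and so do their
Cesàro means. -/

open Filter Topology

noncomputable def riccatiStep (a c KW s : ℝ) : ℝ :=
  c ^ 2 * s + KW - (c * s * (c - a) + KW) ^ 2 / (KW + (c - a) ^ 2 * s)

section RiccatiStep

variable {a c KW s : ℝ}

theorem riccatiStep_eq_div (h : KW + (c - a) ^ 2 * s ≠ 0) :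
    riccatiStep a c KW s = a ^ 2 * KW * s / (KW + (c - a) ^ 2 * s) := by
  rw [riccatiStep, eq_div_iff h, sub_mul, div_mul_cancel₀ _ h]
  ring

theorem riccatiStep_nonneg (hKW : 0 < KW) (hs : 0 ≤ s) : 0 ≤ riccatiStep a c KW s := by
  rw [riccatiStep_eq_div (by positivity)]
  positivity

theorem riccatiStep_le_sq_mul (hKW : 0 < KW) (hs : 0 ≤ s) :
    riccatiStep a c KW s ≤ a ^ 2 * s := by
  have hden : 0 < KW + (c - a) ^ 2 * s := by positivity
  rw [riccatiStep_eq_div hden.ne', div_le_iff₀ hden]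
  nlinarith [sq_nonneg (a * (c - a) * s)]

end RiccatiStep

theorem tendsto_zero_of_nonneg_of_le_mul {u : ℕ → ℝ} {r : ℝ} (hr₀ : 0 ≤ r) (hr₁ : r < 1)
    (hu : ∀ t, 0 ≤ u t) (hstep : ∀ t, u (t + 1) ≤ r * u t) : Tendsto u atTop (𝓝 0) := by
  have hgeom : Tendsto (fun t ↦ r ^ t * u 0) atTop (𝓝 0) := by
    simpa using (tendsto_pow_atTop_nhds_zero_of_lt_one hr₀ hr₁).mul_const (u 0)
  exact squeeze_zero hu (fun t ↦ le_geom hr₀ t fun k _ ↦ hstep k) hgeom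

theorem tendsto_riccatiStep_orbit_zero {a c KW : ℝ} (hKW : 0 < KW) (ha : |a| < 1)
    {Sig : ℕ → ℝ} (h0 : 0 ≤ Sig 0) (hrec : ∀ t, Sig (t + 1) = riccatiStep a c KW (Sig t)) :
    Tendsto Sig atTop (𝓝 0) := by
  have hnonneg : ∀ t, 0 ≤ Sig t := by
    intro t
    induction t with
    | zero => exact h0
    | succ t ih => exact (hrec t).symm ▸ riccatiStep_nonneg hKW ih
  refine tendsto_zero_of_nonneg_of_le_mul (sq_nonneg a) ((sq_lt_one_iff_abs_lt_one a).2 ha)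
    hnonneg fun t ↦ ?_
  rw [hrec t]
  exact riccatiStep_le_sq_mul hKW (hnonneg t)

theorem stmt_7_general (a c KW : ℝ) (hKW : 0 < KW) (ha : |a| < 1)
    (Sig : ℕ → ℝ) (h0 : 0 ≤ Sig 0)
    (hrec : ∀ t, Sig (t + 1) =
      c ^ 2 * Sig t + KW - (c * Sig t * (c - a) + KW) ^ 2 / (KW + (c - a) ^ 2 * Sig t)) :
    Filter.Tendsto
      (fun n : ℕ => (1 / (n : ℝ)) * ∑ t ∈ Finset.range n,
        (1 / 2) * Real.log (2 * Real.pi * Real.exp 1 * ((c - a) ^ 2 * Sig t + KW)))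
      Filter.atTop
      (nhds ((1 / 2) * Real.log (2 * Real.pi * Real.exp 1 * KW))) := by
  have hSig : Tendsto Sig atTop (𝓝 0) := tendsto_riccatiStep_orbit_zero hKW ha h0 hrec
  have hvar : Tendsto (fun t ↦ 2 * Real.pi * Real.exp 1 * ((c - a) ^ 2 * Sig t + KW)) atTop
      (𝓝 (2 * Real.pi * Real.exp 1 * KW)) := by
    simpa using ((hSig.const_mul ((c - a) ^ 2)).add_const KW).const_mul (2 * Real.pi * Real.exp 1)
  have hentropy := ((Real.continuousAt_log (by positivity)).tendsto.comp hvar).const_mul (1 / 2)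
  simpa [one_div] using hentropy.cesaro

/-- for `|a| < 1`, along any solution of the ARMA(a,c) difference Riccati
recursion with nonnegative initial condition, the entropy rate of the noise exists and
equals the white-noise value `(1/2)·log(2πe·K_W)`. -/
theorem stmt_7 (a c KW : ℝ) (hca : c ≠ a) (hKW : 0 < KW) (ha : |a| < 1)
    (Sig : ℕ → ℝ) (h0 : 0 ≤ Sig 0)
    (hrec : ∀ t, Sig (t + 1) =
      c ^ 2 * Sig t + KW - (c * Sig t * (c - a) + KW) ^ 2 / (KW + (c - a) ^ 2 * Sig t)) :
    Filter.Tendsto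
      (fun n : ℕ => (1 / (n : ℝ)) * ∑ t ∈ Finset.range n,
        (1 / 2) * Real.log (2 * Real.pi * Real.exp 1 * ((c - a) ^ 2 * Sig t + KW)))
      Filter.atTop
      (nhds ((1 / 2) * Real.log (2 * Real.pi * Real.exp 1 * KW))) :=
  stmt_7_general a c KW hKW ha Sig h0 hrec
end

section
/- Let a, c, q, r be real numbers with q ≥ 0 and r > 0, and assume the detectability condition (c ≠ 0 or |a| < 1) and the stabilizability condition (q > 0 or |a| < 1). Then there exists a unique Σ∞ ≥ 0 satisfying the PO-SS algebraic Riccati equation Σ∞ = a²·Σ∞ + q − (a·c·Σ∞)²/(r + c²·Σ∞), and this solution is stabilizing, i.e. |a|·r/(r + c²·Σ∞) < 1. -/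
/-!
On `Σ ≥ 0` the denominator `r + c²Σ` is positive, and clearing it turns the ARE into the
quadratic `c²Σ² + (r(1 - a²) - qc²)Σ = qr`. Detectability makes this quadratic nondegenerate, so
it has a nonnegative root. Stabilizability makes the constant `qr` or the linear coefficient
positive, and either forces the nonnegative root to be unique. Finally, if `|a| ≥ 1` then `q > 0`,
and the quadratic gives `(r + c²Σ)Σ - |a|rΣ = qr + (a² - |a|)rΣ + qc²Σ > 0`, which is the
stabilizing inequality.
-/

lemma exists_nonneg_quadratic_root {α β γ : ℝ} (hα : 0 ≤ α) (hγ : 0 ≤ γ)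
    (hdeg : 0 < α ∨ 0 < β) : ∃ x : ℝ, 0 ≤ x ∧ α * x ^ 2 + β * x = γ := by
  rcases hα.eq_or_lt with rfl | hα
  · have hβ : 0 < β := hdeg.resolve_left (lt_irrefl 0)
    exact ⟨γ / β, by positivity, by field_simp; ring⟩
  set s := √(β ^ 2 + 4 * α * γ)
  have hs : s ^ 2 = β ^ 2 + 4 * α * γ := Real.sq_sqrt (by positivity)
  have hβs : β ≤ s := (le_abs_self β).trans (Real.abs_le_sqrt (by nlinarith))
  refine ⟨(s - β) / (2 * α), div_nonneg (sub_nonneg.2 hβs) (by positivity), ?_⟩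
  field_simp
  linear_combination hs

lemma eq_of_nonneg_quadratic_roots {α β γ x y : ℝ} (hα : 0 ≤ α) (hpos : 0 < γ ∨ 0 < β)
    (hx : 0 ≤ x) (hy : 0 ≤ y) (hxγ : α * x ^ 2 + β * x = γ) (hyγ : α * y ^ 2 + β * y = γ) :
    x = y := by
  have hfac : (x - y) * (α * (x + y) + β) = 0 := by linear_combination hxγ - hyγ
  refine sub_eq_zero.1 ((mul_eq_zero.1 hfac).resolve_right fun hsum ↦ ?_)
  have hxy : 0 ≤ α * x * y := by positivity
  rcases hpos with hγ | hβ
  · -- `β = -α(x + y)` turns the equation for `x` into `γ = -αxy ≤ 0`.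
    nlinarith
  · nlinarith

section Riccati

variable {a c q r S : ℝ}

lemma are_iff_quadratic (hden : r + c ^ 2 * S ≠ 0) :
    S = a ^ 2 * S + q - (a * c * S) ^ 2 / (r + c ^ 2 * S) ↔
      c ^ 2 * S ^ 2 + (r * (1 - a ^ 2) - q * c ^ 2) * S = q * r := by
  calc S = a ^ 2 * S + q - (a * c * S) ^ 2 / (r + c ^ 2 * S)
        ↔ (a * c * S) ^ 2 / (r + c ^ 2 * S) = a ^ 2 * S + q - S := by
          constructor <;> intro h <;> linarith
    _ ↔ (a * c * S) ^ 2 = (a ^ 2 * S + q - S) * (r + c ^ 2 * S) := div_eq_iff hden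
    _ ↔ _ := by constructor <;> intro h <;> linear_combination h

lemma stabilizing_of_quadratic (hr : 0 < r) (hstab : 0 < q ∨ |a| < 1)
    (hS : 0 ≤ S) (hquad : c ^ 2 * S ^ 2 + (r * (1 - a ^ 2) - q * c ^ 2) * S = q * r) :
    |a| * r < r + c ^ 2 * S := by
  rcases lt_or_ge |a| 1 with ha | ha
  · nlinarith [mul_lt_of_lt_one_left hr ha, sq_nonneg c]
  have hq : 0 < q := hstab.resolve_right ha.not_gt
  have ha2 : |a| ≤ a ^ 2 := by nlinarith [sq_abs a]
  have hgap : (r + c ^ 2 * S) * S - |a| * r * S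
      = q * r + (a ^ 2 - |a|) * r * S + q * c ^ 2 * S := by
    linear_combination hquad
  refine lt_of_mul_lt_mul_right (a := S) ?_ hS
  linarith [mul_pos hq hr, mul_nonneg (mul_nonneg (sub_nonneg.2 ha2) hr.le) hS,
    mul_nonneg (mul_nonneg hq.le (sq_nonneg c)) hS]

end Riccati

/-- under the scalar detectability (`c ≠ 0 ∨ |a| < 1`) and stabilizability
(`q > 0 ∨ |a| < 1`) conditions, the PO-SS algebraic Riccati equation
`Σ = a²Σ + q - (acΣ)²/(r + c²Σ)` has a unique nonnegative solution, and it is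
stabilizing, i.e. `|a|·r/(r + c²Σ) < 1`. -/
theorem stmt_11 (a c q r : ℝ) (hq : 0 ≤ q) (hr : 0 < r)
    (hdet : c ≠ 0 ∨ |a| < 1) (hstab : 0 < q ∨ |a| < 1) :
    ∃ S : ℝ, (0 ≤ S ∧ S = a ^ 2 * S + q - (a * c * S) ^ 2 / (r + c ^ 2 * S) ∧
        |a| * r / (r + c ^ 2 * S) < 1) ∧
      ∀ S' : ℝ, 0 ≤ S' → S' = a ^ 2 * S' + q - (a * c * S') ^ 2 / (r + c ^ 2 * S') →
        S' = S := by
  have hden {S : ℝ} (hS : 0 ≤ S) : 0 < r + c ^ 2 * S := by positivity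
  have hlin (ha : |a| < 1) : 0 < r * (1 - a ^ 2) :=
    mul_pos hr (sub_pos.2 ((sq_lt_one_iff_abs_lt_one a).2 ha))
  have hdeg : 0 < c ^ 2 ∨ 0 < r * (1 - a ^ 2) - q * c ^ 2 := by
    rcases eq_or_ne c 0 with rfl | hc
    · simpa using hlin (hdet.resolve_left (not_not.2 rfl))
    · exact Or.inl (by positivity)
  have hpos : 0 < q * r ∨ 0 < r * (1 - a ^ 2) - q * c ^ 2 := by
    rcases hq.eq_or_lt with rfl | hq
    · simpa using hlin (hstab.resolve_left (lt_irrefl 0))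
    · exact Or.inl (by positivity)
  obtain ⟨S, hS, hquad⟩ := exists_nonneg_quadratic_root (sq_nonneg c) (mul_nonneg hq hr.le) hdeg
  refine ⟨S, ⟨hS, (are_iff_quadratic (hden hS).ne').2 hquad, ?_⟩, fun S' hS' hS'eq ↦ ?_⟩
  · rw [div_lt_one (hden hS)]
    exact stabilizing_of_quadratic hr hstab hS hquad
  · exact eq_of_nonneg_quadratic_roots (sq_nonneg c) hpos hS' hS
      ((are_iff_quadratic (hden hS').ne').1 hS'eq) hquad
end

section
/- Let a, c, q, r be real numbers with q ≥ 0 and r > 0, and assume (c ≠ 0 or |a| < 1) and (q > 0 or |a| < 1). Let (Σ_t)_{t≥1} satisfy the PO-SS difference Riccati recursion Σ_{t+1} = a²·Σ_t + q − (a·c·Σ_t)²/(r + c²·Σ_t) with arbitrary initial condition Σ_1 ≥ 0. Then Σ_t ≥ 0 for all t and Σ_n converges as n → ∞ to the unique nonnegative stabilizing solution Σ∞ of the corresponding algebraic Riccati equation. -/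
/-- Existence of a nonnegative root of the scalar Riccati quadratic with the extra
positivity property `0 < c^2*S + B` (which encodes stabilizability). -/
lemma ricc_root (a c q r : ℝ) (hq : 0 ≤ q) (hr : 0 < r)
    (hdet : c ≠ 0 ∨ |a| < 1) (hstab : 0 < q ∨ |a| < 1) :
    ∃ S : ℝ, 0 ≤ S ∧ c^2*S^2 + (r - a^2*r - q*c^2)*S = q*r ∧
      0 < c^2*S + (r - a^2*r - q*c^2) := by
  by_cases hc : c = 0
  · have ha : |a| < 1 := hdet.resolve_left (fun h => h hc)
    have ha2 : a^2 < 1 := by nlinarith [sq_abs a, abs_nonneg a]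
    have h1 : (0:ℝ) < 1 - a^2 := by linarith
    refine ⟨q/(1-a^2), div_nonneg hq h1.le, ?_, ?_⟩
    · subst hc; field_simp; ring
    · subst hc; simp only [ne_eq, OfNat.ofNat_ne_zero, not_false_eq_true, zero_pow,
        zero_mul, mul_zero, sub_zero, zero_add]
      nlinarith
  · have hc2 : (0:ℝ) < c^2 := by positivity
    set B : ℝ := r - a^2*r - q*c^2 with hBdef
    have hDnn : 0 ≤ B^2 + 4*c^2*(q*r) := by positivity
    set D : ℝ := Real.sqrt (B^2 + 4*c^2*(q*r)) with hDdef
    have hD2 : D^2 = B^2 + 4*c^2*(q*r) := Real.sq_sqrt hDnn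
    have hDabs : |B| ≤ D := by
      rw [hDdef, ← Real.sqrt_sq_eq_abs]
      exact Real.sqrt_le_sqrt (by nlinarith [mul_nonneg hq hr.le])
    have hDB : B ≤ D := le_trans (le_abs_self B) hDabs
    refine ⟨(D - B)/(2*c^2), div_nonneg (by linarith) (by positivity), ?_, ?_⟩
    · field_simp
      nlinarith [hD2]
    · have hDBpos : 0 < D + B := by
        rcases hstab with hqp | ha
        · have : B^2 < D^2 := by nlinarith [mul_pos hqp hr]
          have : |B| < D := by
            nlinarith [abs_nonneg B, sq_abs B, Real.sqrt_nonneg (B^2 + 4*c^2*(q*r))]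
          have := neg_abs_le B
          linarith
        · have ha2 : a^2 < 1 := by nlinarith [sq_abs a, abs_nonneg a]
          have hDnn' : 0 ≤ D := Real.sqrt_nonneg _
          rcases le_or_gt q 0 with hq0 | hqp
          · have hq0 : q = 0 := le_antisymm hq0 hq
            have : 0 < B := by rw [hBdef, hq0]; nlinarith
            linarith
          · have : B^2 < D^2 := by nlinarith [mul_pos hqp hr]
            have : |B| < D := by
              nlinarith [abs_nonneg B, sq_abs B, Real.sqrt_nonneg (B^2 + 4*c^2*(q*r))]
            have := neg_abs_le B
            linarith
      have : c^2*((D - B)/(2*c^2)) = (D - B)/2 := by field_simp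
      rw [this]
      linarith

set_option maxHeartbeats 1000000 in
theorem stmt_12 (a c q r : ℝ) (hq : 0 ≤ q) (hr : 0 < r)
    (hdet : c ≠ 0 ∨ |a| < 1) (hstab : 0 < q ∨ |a| < 1)
    (Sig : ℕ → ℝ) (h0 : 0 ≤ Sig 0)
    (hrec : ∀ t, Sig (t + 1) =
      a ^ 2 * Sig t + q - (a * c * Sig t) ^ 2 / (r + c ^ 2 * Sig t)) :
    (∀ t, 0 ≤ Sig t) ∧
    ∃ S : ℝ, (0 ≤ S ∧ S = a ^ 2 * S + q - (a * c * S) ^ 2 / (r + c ^ 2 * S) ∧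
        |a| * r / (r + c ^ 2 * S) < 1 ∧
        (∀ S' : ℝ, 0 ≤ S' → S' = a ^ 2 * S' + q - (a * c * S') ^ 2 / (r + c ^ 2 * S') →
          |a| * r / (r + c ^ 2 * S') < 1 → S' = S)) ∧
      Filter.Tendsto Sig Filter.atTop (nhds S) := by
  -- the Riccati map simplifies to  g x = q + a^2*r*x/(r + c^2*x)
  have hg : ∀ x : ℝ, 0 ≤ x →
      a ^ 2 * x + q - (a * c * x) ^ 2 / (r + c ^ 2 * x) = q + a^2*r*x/(r + c^2*x) := by
    intro x hx
    have hd : 0 < r + c ^ 2 * x := by nlinarith [mul_nonneg (sq_nonneg c) hx]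
    field_simp
    ring
  -- nonnegativity of the sequence
  have hpos : ∀ t, 0 ≤ Sig t := by
    intro t
    induction t with
    | zero => exact h0
    | succ n ih =>
      rw [hrec n, hg _ ih]
      have hd : 0 < r + c ^ 2 * Sig n := by nlinarith [mul_nonneg (sq_nonneg c) ih]
      have h1 : 0 ≤ a^2*r*Sig n / (r + c^2*Sig n) :=
        div_nonneg (by positivity) hd.le
      linarith
  have hstep : ∀ t, Sig (t + 1) = q + a^2*r*Sig t/(r + c^2*Sig t) :=
    fun t => (hrec t).trans (hg _ (hpos t))
  refine ⟨hpos, ?_⟩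
  obtain ⟨S, hS0, hK1, hK3⟩ := ricc_root a c q r hq hr hdet hstab
  have hdS : 0 < r + c^2*S := by nlinarith [mul_nonneg (sq_nonneg c) hS0]
  -- S is a fixed point of g
  have hfixg : q + a^2*r*S/(r + c^2*S) = S := by
    field_simp
    linear_combination -hK1
  -- monotonicity of g on nonnegatives
  have hmono : ∀ x y : ℝ, 0 ≤ x → x ≤ y →
      q + a^2*r*x/(r + c^2*x) ≤ q + a^2*r*y/(r + c^2*y) := by
    intro x y hx hxy
    have hy : 0 ≤ y := le_trans hx hxy
    have hdx : 0 < r + c^2*x := by nlinarith [mul_nonneg (sq_nonneg c) hx]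
    have hdy : 0 < r + c^2*y := by nlinarith [mul_nonneg (sq_nonneg c) hy]
    have : a^2*r*x/(r + c^2*x) ≤ a^2*r*y/(r + c^2*y) := by
      rw [div_le_div_iff₀ hdx hdy]
      nlinarith [mul_nonneg (mul_nonneg (mul_nonneg (sq_nonneg a) hr.le) hr.le) (sub_nonneg.2 hxy)]
    linarith
  -- below the fixed point the map increases points
  have hge : ∀ x : ℝ, 0 ≤ x → x ≤ S → x ≤ q + a^2*r*x/(r + c^2*x) := by
    intro x hx hxS
    have hdx : 0 < r + c^2*x := by nlinarith [mul_nonneg (sq_nonneg c) hx]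
    rw [← sub_nonneg]
    have hrw : q + a^2*r*x/(r + c^2*x) - x
        = (q*(r + c^2*x) + a^2*r*x - x*(r + c^2*x))/(r + c^2*x) := by
      field_simp
    rw [hrw]
    apply div_nonneg _ hdx.le
    have key : 0 ≤ (S - x) * (c^2*(S + x) + (r - a^2*r - q*c^2)) := by
      apply mul_nonneg (by linarith)
      nlinarith [mul_nonneg (sq_nonneg c) hx]
    nlinarith [key, hK1]
  -- above the fixed point the map decreases points
  have hle : ∀ x : ℝ, S ≤ x → q + a^2*r*x/(r + c^2*x) ≤ x := by
    intro x hxS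
    have hx : 0 ≤ x := le_trans hS0 hxS
    have hdx : 0 < r + c^2*x := by nlinarith [mul_nonneg (sq_nonneg c) hx]
    rw [← sub_nonneg]
    have hrw : x - (q + a^2*r*x/(r + c^2*x))
        = (x*(r + c^2*x) - q*(r + c^2*x) - a^2*r*x)/(r + c^2*x) := by
      field_simp
      ring
    rw [hrw]
    apply div_nonneg _ hdx.le
    have key : 0 ≤ (x - S) * (c^2*(x + S) + (r - a^2*r - q*c^2)) := by
      apply mul_nonneg (by linarith)
      nlinarith [mul_nonneg (sq_nonneg c) hx]
    nlinarith [key, hK1]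
  -- uniqueness of the nonnegative fixed point
  have huniq : ∀ x : ℝ, 0 ≤ x → q + a^2*r*x/(r + c^2*x) = x → x = S := by
    intro x hx hfx
    have hdx : 0 < r + c^2*x := by nlinarith [mul_nonneg (sq_nonneg c) hx]
    have heq' : c^2*x^2 + (r - a^2*r - q*c^2)*x = q*r := by
      have := hfx
      field_simp at this
      linear_combination -this
    have hfac : (x - S) * (c^2*(x + S) + (r - a^2*r - q*c^2)) = 0 := by
      linear_combination heq' - hK1
    have h2 : 0 < c^2*(x + S) + (r - a^2*r - q*c^2) := by
      nlinarith [mul_nonneg (sq_nonneg c) hx]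
    have := mul_eq_zero.1 hfac
    rcases this with h | h
    · linarith
    · linarith
  -- the stabilizing inequality for S
  have hstabS : |a| * r / (r + c ^ 2 * S) < 1 := by
    rw [div_lt_one hdS]
    nlinarith [hK3, sq_abs a, abs_nonneg a, mul_nonneg (sq_nonneg c) hS0,
      mul_nonneg hq (sq_nonneg c),
      mul_nonneg (mul_nonneg (abs_nonneg a) hr.le) (mul_nonneg (sq_nonneg c) hS0),
      sq_nonneg (r + c^2*S - |a| * r)]
  -- any nonnegative limit of the sequence must be S
  have hlimS : ∀ L : ℝ, 0 ≤ L → Filter.Tendsto Sig Filter.atTop (nhds L) → L = S := by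
    intro L hL hT
    have hdL : 0 < r + c^2*L := by nlinarith [mul_nonneg (sq_nonneg c) hL]
    have hT1 : Filter.Tendsto (fun t => Sig (t + 1)) Filter.atTop (nhds L) :=
      hT.comp (Filter.tendsto_add_atTop_nat 1)
    have hnum : Filter.Tendsto (fun t => a^2*r*Sig t) Filter.atTop (nhds (a^2*r*L)) :=
      hT.const_mul _
    have hden : Filter.Tendsto (fun t => r + c^2*Sig t) Filter.atTop (nhds (r + c^2*L)) :=
      (hT.const_mul (c^2)).const_add r
    have hT2 : Filter.Tendsto (fun t => q + a^2*r*Sig t/(r + c^2*Sig t)) Filter.atTop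
        (nhds (q + a^2*r*L/(r + c^2*L))) :=
      (hnum.div hden (ne_of_gt hdL)).const_add q
    have hT1' : Filter.Tendsto (fun t => Sig (t + 1)) Filter.atTop
        (nhds (q + a^2*r*L/(r + c^2*L))) := by
      apply hT2.congr
      intro t
      exact (hstep t).symm
    have hLfix : L = q + a^2*r*L/(r + c^2*L) := tendsto_nhds_unique hT1 hT1'
    exact huniq L hL hLfix.symm
  refine ⟨S, ⟨hS0, by rw [hg S hS0, hfixg], hstabS, ?_⟩, ?_⟩
  · intro S' hS'0 heq _
    rw [hg S' hS'0] at heq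
    exact huniq S' hS'0 heq.symm
  · rcases le_total (Sig 0) S with hc0 | hc0
    · -- increasing case
      have hub : ∀ t, Sig t ≤ S := by
        intro t
        induction t with
        | zero => exact hc0
        | succ n ih =>
          rw [hstep n]
          calc q + a^2*r*Sig n/(r + c^2*Sig n) ≤ q + a^2*r*S/(r + c^2*S) :=
                hmono _ _ (hpos n) ih
            _ = S := hfixg
      have hmonoSig : Monotone Sig := by
        apply monotone_nat_of_le_succ
        intro n
        rw [hstep n]
        exact hge _ (hpos n) (hub n)
      have hbdd : BddAbove (Set.range Sig) := by
        refine ⟨S, ?_⟩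
        rintro x ⟨t, rfl⟩
        exact hub t
      have hT := tendsto_atTop_ciSup hmonoSig hbdd
      have hL0 : 0 ≤ ⨆ t, Sig t := le_trans h0 (le_ciSup hbdd 0)
      rw [← hlimS _ hL0 hT] at *
      exact hT
    · -- decreasing case
      have hlb : ∀ t, S ≤ Sig t := by
        intro t
        induction t with
        | zero => exact hc0
        | succ n ih =>
          rw [hstep n]
          calc S = q + a^2*r*S/(r + c^2*S) := hfixg.symm
            _ ≤ q + a^2*r*Sig n/(r + c^2*Sig n) := hmono _ _ hS0 ih
      have hantiSig : Antitone Sig := by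
        apply antitone_nat_of_succ_le
        intro n
        rw [hstep n]
        exact hle _ (hlb n)
      have hbdd : BddBelow (Set.range Sig) := by
        refine ⟨0, ?_⟩
        rintro x ⟨t, rfl⟩
        exact hpos t
      have hT := tendsto_atTop_ciInf hantiSig hbdd
      have hL0 : 0 ≤ ⨅ t, Sig t := le_ciInf fun t => hpos t
      rw [← hlimS _ hL0 hT] at *
      exact hT
end

section
/- Let a, c, q, r be real numbers with q ≥ 0 and r > 0, assume (c ≠ 0 or |a| < 1) and (q > 0 or |a| < 1), and let Σ∞ ≥ 0 be the unique nonnegative stabilizing solution of the PO-SS algebraic Riccati equation. Then for every initial condition Σ_1 ≥ 0 of the PO-SS difference Riccati recursion, the entropy rate exists and equals (1/n)·Σ_{t=1}^{n} (1/2)·log(2·π·e·[c²·Σ_t + r]) → (1/2)·log(2·π·e·[c²·Σ∞ + r]) as n → ∞. -/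
/-!
For `S, T ≥ 0` the Riccati map `F` satisfies
`F S - F T = (a²r / (r + c²T)) · (r / (r + c²S)) · (S - T)`.
At the fixed point `T = Σ∞` the first factor is `< 1`: the ARE reads `Σ∞ = q + a²r Σ∞ / (r + c²Σ∞)`,
which forces it when `q > 0`, while `|a| < 1` bounds it by `a²`. The second factor is `≤ 1`,
so `Σ_t → Σ∞` geometrically, the entropy terms converge by continuity of `log`, and so do their
Cesàro means.
-/

open Filter Topology

theorem tendsto_of_dist_succ_le_mul {X : Type*} [PseudoMetricSpace X] {x : ℕ → X} {L : X}
    {K : ℝ} (hK0 : 0 ≤ K) (hK1 : K < 1) (h : ∀ n, dist (x (n + 1)) L ≤ K * dist (x n) L) :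
    Tendsto x atTop (𝓝 L) := by
  have hgeom : ∀ n, dist (x n) L ≤ K ^ n * dist (x 0) L := by
    intro n
    induction n with
    | zero => simp
    | succ n ih =>
      calc dist (x (n + 1)) L ≤ K * dist (x n) L := h n
        _ ≤ K * (K ^ n * dist (x 0) L) := by gcongr
        _ = K ^ (n + 1) * dist (x 0) L := by ring
  refine tendsto_iff_dist_tendsto_zero.2 (squeeze_zero (fun _ => dist_nonneg) hgeom ?_)
  simpa using (tendsto_pow_atTop_nhds_zero_of_lt_one hK0 hK1).mul_const (dist (x 0) L)

noncomputable def riccati (a c q r S : ℝ) : ℝ :=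
  a ^ 2 * S + q - (a * c * S) ^ 2 / (r + c ^ 2 * S)

section Riccati

variable {a c q r S T : ℝ}

theorem riccati_eq_add_div (h : r + c ^ 2 * S ≠ 0) :
    riccati a c q r S = q + a ^ 2 * r * S / (r + c ^ 2 * S) := by
  rw [riccati, add_div' _ _ _ h, sub_div' h, div_eq_div_iff h h]
  ring

theorem riccati_nonneg (hq : 0 ≤ q) (hr : 0 < r) (hS : 0 ≤ S) : 0 ≤ riccati a c q r S := by
  rw [riccati_eq_add_div (by positivity)]
  positivity

theorem riccati_sub_riccati (hS : r + c ^ 2 * S ≠ 0) (hT : r + c ^ 2 * T ≠ 0) :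
    riccati a c q r S - riccati a c q r T =
      a ^ 2 * r / (r + c ^ 2 * T) * (r / (r + c ^ 2 * S)) * (S - T) := by
  rw [riccati_eq_add_div hS, riccati_eq_add_div hT, add_sub_add_left_eq_sub, div_sub_div _ _ hS hT,
    div_mul_div_comm, div_mul_eq_mul_div, div_eq_div_iff (mul_ne_zero hS hT) (mul_ne_zero hT hS)]
  ring

theorem abs_riccati_sub_le (hr : 0 < r) (hS : 0 ≤ S) (hT : 0 ≤ T) :
    |riccati a c q r S - riccati a c q r T| ≤ a ^ 2 * r / (r + c ^ 2 * T) * |S - T| := by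
  rw [riccati_sub_riccati (by positivity) (by positivity), abs_mul, abs_mul,
    abs_of_nonneg (by positivity), abs_of_nonneg (by positivity)]
  gcongr
  refine mul_le_of_le_one_right (by positivity) ((div_le_one (by positivity)).2 ?_)
  nlinarith [mul_nonneg (sq_nonneg c) hS]

theorem riccati_gain_lt_one (hr : 0 < r) (hS : 0 ≤ S) (hfix : riccati a c q r S = S)
    (h : 0 < q ∨ |a| < 1) : a ^ 2 * r / (r + c ^ 2 * S) < 1 := by
  have hD : 0 < r + c ^ 2 * S := by positivity
  rw [div_lt_one hD]
  rcases h with hq | ha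
  · have hfix' : a ^ 2 * r * S = (S - q) * (r + c ^ 2 * S) := by
      rw [riccati_eq_add_div hD.ne'] at hfix
      field_simp at hfix
      linarith
    have hSpos : 0 < S := hS.lt_of_ne (by rintro rfl; nlinarith [mul_pos hq hD])
    nlinarith [mul_pos hq hD]
  · have ha2 : a ^ 2 < 1 := by nlinarith [sq_abs a, abs_nonneg a]
    nlinarith [mul_nonneg (sq_nonneg c) hS]

theorem tendsto_of_riccati_recursion {x : ℕ → ℝ} (hq : 0 ≤ q) (hr : 0 < r) (hS : 0 ≤ S)
    (hfix : riccati a c q r S = S) (h : 0 < q ∨ |a| < 1) (hx0 : 0 ≤ x 0)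
    (hx : ∀ n, x (n + 1) = riccati a c q r (x n)) : Tendsto x atTop (𝓝 S) := by
  have hnonneg : ∀ n, 0 ≤ x n := by
    intro n
    induction n with
    | zero => exact hx0
    | succ n ih => rw [hx n]; exact riccati_nonneg hq hr ih
  refine tendsto_of_dist_succ_le_mul (by positivity) (riccati_gain_lt_one hr hS hfix h)
    fun n => ?_
  simpa only [Real.dist_eq, hx n, hfix] using
    abs_riccati_sub_le (a := a) (c := c) (q := q) hr (hnonneg n) hS

end Riccati

theorem stmt_13_general (a c q r Sinf : ℝ) (hq : 0 ≤ q) (hr : 0 < r)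
    (hstab : 0 < q ∨ |a| < 1)
    (hSinf : 0 ≤ Sinf)
    (hARE : Sinf = a ^ 2 * Sinf + q - (a * c * Sinf) ^ 2 / (r + c ^ 2 * Sinf))
    (Sig : ℕ → ℝ) (h0 : 0 ≤ Sig 0)
    (hrec : ∀ t, Sig (t + 1) =
      a ^ 2 * Sig t + q - (a * c * Sig t) ^ 2 / (r + c ^ 2 * Sig t)) :
    Filter.Tendsto
      (fun n : ℕ => (1 / (n : ℝ)) * ∑ t ∈ Finset.range n,
        (1 / 2) * Real.log (2 * Real.pi * Real.exp 1 * (c ^ 2 * Sig t + r)))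
      Filter.atTop
      (nhds ((1 / 2) * Real.log (2 * Real.pi * Real.exp 1 * (c ^ 2 * Sinf + r)))) := by
  have hSig : Tendsto Sig atTop (𝓝 Sinf) :=
    tendsto_of_riccati_recursion hq hr hSinf hARE.symm hstab h0 hrec
  have hentropy : Tendsto
      (fun t => (1 / 2) * Real.log (2 * Real.pi * Real.exp 1 * (c ^ 2 * Sig t + r))) atTop
      (𝓝 ((1 / 2) * Real.log (2 * Real.pi * Real.exp 1 * (c ^ 2 * Sinf + r)))) :=
    ((((hSig.const_mul _).add_const r).const_mul _).log (by positivity)).const_mul _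
  simpa only [one_div] using hentropy.cesaro

/-- with `Σ∞` the unique nonnegative stabilizing solution of the PO-SS
algebraic Riccati equation, along any solution of the PO-SS difference Riccati
recursion with nonnegative initial condition, the entropy rate exists and equals
`(1/2)·log(2πe·(c²Σ∞ + r))`. -/
theorem stmt_13 (a c q r Sinf : ℝ) (hq : 0 ≤ q) (hr : 0 < r)
    (hdet : c ≠ 0 ∨ |a| < 1) (hstab : 0 < q ∨ |a| < 1)
    (hSinf : 0 ≤ Sinf)
    (hARE : Sinf = a ^ 2 * Sinf + q - (a * c * Sinf) ^ 2 / (r + c ^ 2 * Sinf))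
    (hstabS : |a| * r / (r + c ^ 2 * Sinf) < 1)
    (huniq : ∀ S' : ℝ, 0 ≤ S' →
      S' = a ^ 2 * S' + q - (a * c * S') ^ 2 / (r + c ^ 2 * S') →
      |a| * r / (r + c ^ 2 * S') < 1 → S' = Sinf)
    (Sig : ℕ → ℝ) (h0 : 0 ≤ Sig 0)
    (hrec : ∀ t, Sig (t + 1) =
      a ^ 2 * Sig t + q - (a * c * Sig t) ^ 2 / (r + c ^ 2 * Sig t)) :
    Filter.Tendsto
      (fun n : ℕ => (1 / (n : ℝ)) * ∑ t ∈ Finset.range n,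
        (1 / 2) * Real.log (2 * Real.pi * Real.exp 1 * (c ^ 2 * Sig t + r)))
      Filter.atTop
      (nhds ((1 / 2) * Real.log (2 * Real.pi * Real.exp 1 * (c ^ 2 * Sinf + r)))) :=
  stmt_13_general a c q r Sinf hq hr hstab hSinf hARE Sig h0 hrec
end

section
/- Let a, c, Λ, K_W be real numbers with K_W > 0 and Λ + c − a ≠ 0. For every real K with K_W + (Λ+c−a)²·K ≠ 0, K satisfies the algebraic Riccati equation K = c²·K + K_W − (c·K·(Λ+c−a) + K_W)²/(K_W + (Λ+c−a)²·K) if and only if K = 0 or K = K_W·((Λ−a)² − 1)/(Λ+c−a)². In particular K = 0 is the unique nonnegative solution whenever |Λ−a| < 1. -/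
/-- for the input algebraic Riccati equation of the AGN channel driven by
ARMA(a,c) noise (with `K_Z = 0`, `Σ = 0`), any `K` with nonzero denominator satisfies
the ARE iff `K = 0` or `K = K_W((Λ-a)² - 1)/(Λ+c-a)²`; in particular `K = 0` is the
unique nonnegative solution whenever `|Λ - a| < 1`. -/
theorem stmt_14 (a c Lam KW : ℝ) (hKW : 0 < KW) (hb : Lam + c - a ≠ 0) :
    (∀ K : ℝ, KW + (Lam + c - a) ^ 2 * K ≠ 0 →
      (K = c ^ 2 * K + KW -
          (c * K * (Lam + c - a) + KW) ^ 2 / (KW + (Lam + c - a) ^ 2 * K) ↔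
        K = 0 ∨ K = KW * ((Lam - a) ^ 2 - 1) / (Lam + c - a) ^ 2)) ∧
    (|Lam - a| < 1 → ∀ K : ℝ, KW + (Lam + c - a) ^ 2 * K ≠ 0 → 0 ≤ K →
      (K = c ^ 2 * K + KW -
          (c * K * (Lam + c - a) + KW) ^ 2 / (KW + (Lam + c - a) ^ 2 * K) ↔
        K = 0)) := by
  have hb2 : (Lam + c - a) ^ 2 ≠ 0 := pow_ne_zero _ hb
  have main : ∀ K : ℝ, KW + (Lam + c - a) ^ 2 * K ≠ 0 →
      (K = c ^ 2 * K + KW -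
          (c * K * (Lam + c - a) + KW) ^ 2 / (KW + (Lam + c - a) ^ 2 * K) ↔
        K = 0 ∨ K = KW * ((Lam - a) ^ 2 - 1) / (Lam + c - a) ^ 2) := by
    intro K hK
    rw [eq_sub_iff_add_eq, add_comm, div_add' _ _ _ hK, div_eq_iff hK]
    constructor
    · intro h
      have h3 : K * ((Lam + c - a) ^ 2 * K - KW * ((Lam - a) ^ 2 - 1)) = 0 := by
        nlinarith [h]
      rcases mul_eq_zero.mp h3 with h4 | h4
      · exact Or.inl h4
      · right
        field_simp
        linarith [h4]
    · rintro (rfl | h)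
      · ring
      · rw [h]; field_simp; ring
  refine ⟨main, fun hLam K hK hK0 => ?_⟩
  rw [main K hK]
  have hneg : KW * ((Lam - a) ^ 2 - 1) / (Lam + c - a) ^ 2 < 0 := by
    apply div_neg_of_neg_of_pos
    · have : (Lam - a) ^ 2 < 1 := by
        rw [← sq_abs]; nlinarith [abs_nonneg (Lam - a)]
      nlinarith
    · positivity
  constructor
  · rintro (h | h)
    · exact h
    · linarith
  · exact Or.inl
end

section
/- Let a, c, Λ, K_W be real numbers with K_W > 0, Λ + c − a ≠ 0 and |Λ − a| < 1, and let (K_t)_{t≥1} satisfy the input difference Riccati recursion K_{t+1} = c²·K_t + K_W − (c·K_t·(Λ+c−a) + K_W)²/(K_W + (Λ+c−a)²·K_t) with arbitrary initial condition K_1 ≥ 0. Then K_t ≥ 0 for all t and K_n converges to 0 as n → ∞, where 0 is the unique nonnegative stabilizing solution of the corresponding algebraic Riccati equation. -/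
/-- for `|Λ - a| < 1`, the input difference Riccati recursion (with
`K_Z = 0`, `Σ = 0`) with arbitrary nonnegative initial condition stays nonnegative and
converges to `0`, where `0` is the unique nonnegative stabilizing solution of the
corresponding algebraic Riccati equation (the Kalman gain is
`F(K) = (cK(Λ+c-a)+K_W)/(K_W+(Λ+c-a)²K)`, the closed-loop coefficient is
`F^{CL}(K) = c - F(K)(Λ+c-a)`, and stabilizing means `|F^{CL}(K)| < 1`). -/
theorem stmt_16 (a c Lam KW : ℝ) (hKW : 0 < KW) (hb : Lam + c - a ≠ 0)
    (hLa : |Lam - a| < 1)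
    (K : ℕ → ℝ) (h0 : 0 ≤ K 0)
    (hrec : ∀ t, K (t + 1) =
      c ^ 2 * K t + KW -
        (c * K t * (Lam + c - a) + KW) ^ 2 / (KW + (Lam + c - a) ^ 2 * K t)) :
    (∀ t, 0 ≤ K t) ∧
    Filter.Tendsto K Filter.atTop (nhds 0) ∧
    ((0 : ℝ) = c ^ 2 * 0 + KW -
        (c * 0 * (Lam + c - a) + KW) ^ 2 / (KW + (Lam + c - a) ^ 2 * 0) ∧
      |c - (c * 0 * (Lam + c - a) + KW) / (KW + (Lam + c - a) ^ 2 * 0) * (Lam + c - a)|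
        < 1) ∧
    (∀ K' : ℝ, 0 ≤ K' →
      K' = c ^ 2 * K' + KW -
        (c * K' * (Lam + c - a) + KW) ^ 2 / (KW + (Lam + c - a) ^ 2 * K') →
      |c - (c * K' * (Lam + c - a) + KW) / (KW + (Lam + c - a) ^ 2 * K') * (Lam + c - a)|
        < 1 → K' = 0) := by
  set b := Lam + c - a with hbdef
  have hr : (a - Lam) ^ 2 < 1 := by
    have : |a - Lam| < 1 := by rwa [abs_sub_comm] at hLa
    nlinarith [abs_nonneg (a - Lam), sq_abs (a - Lam)]
  have hrnn : (0 : ℝ) ≤ (a - Lam) ^ 2 := sq_nonneg _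
  have hden : ∀ x : ℝ, 0 ≤ x → 0 < KW + b ^ 2 * x := fun x hx => by positivity
  have hsimp : ∀ x : ℝ, 0 ≤ x →
      c ^ 2 * x + KW - (c * x * b + KW) ^ 2 / (KW + b ^ 2 * x)
        = KW * (a - Lam) ^ 2 * x / (KW + b ^ 2 * x) := by
    intro x hx
    have hd := (hden x hx).ne'
    field_simp
    ring
  have hnn : ∀ t, 0 ≤ K t := by
    intro t
    induction t with
    | zero => exact h0
    | succ n ih =>
      rw [hrec n, hsimp _ ih]
      exact div_nonneg (by positivity) (hden _ ih).le
  have hcontr : ∀ t, K (t + 1) ≤ (a - Lam) ^ 2 * K t := by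
    intro t
    rw [hrec t, hsimp _ (hnn t)]
    rw [div_le_iff₀ (hden _ (hnn t))]
    nlinarith [mul_nonneg (mul_nonneg hrnn (sq_nonneg b)) (sq_nonneg (K t))]
  have hbound : ∀ t, K t ≤ ((a - Lam) ^ 2) ^ t * K 0 := by
    intro t
    induction t with
    | zero => simp
    | succ n ih =>
      calc K (n + 1) ≤ (a - Lam) ^ 2 * K n := hcontr n
        _ ≤ (a - Lam) ^ 2 * (((a - Lam) ^ 2) ^ n * K 0) := by
            exact mul_le_mul_of_nonneg_left ih hrnn
        _ = ((a - Lam) ^ 2) ^ (n + 1) * K 0 := by ring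
  have htend : Filter.Tendsto K Filter.atTop (nhds 0) := by
    have h1 : Filter.Tendsto (fun t => ((a - Lam) ^ 2) ^ t * K 0) Filter.atTop (nhds 0) := by
      have := (tendsto_pow_atTop_nhds_zero_of_lt_one hrnn hr).mul_const (K 0)
      simpa using this
    exact squeeze_zero hnn hbound h1
  refine ⟨hnn, htend, ⟨by field_simp; ring, ?_⟩, ?_⟩
  · have h : (c * 0 * b + KW) / (KW + b ^ 2 * 0) = 1 := by
      rw [mul_zero, zero_mul, zero_add, mul_zero, add_zero, div_self hKW.ne']
    rw [h, one_mul, show c - b = a - Lam by rw [hbdef]; ring]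
    rwa [abs_sub_comm] at hLa
  · intro K' hK' heq _
    rw [hsimp _ hK'] at heq
    have hd := hden _ hK'
    rw [eq_div_iff hd.ne'] at heq
    nlinarith [sq_nonneg b, mul_pos hKW (sub_pos.mpr hr), hb, sq_nonneg (b * K')]
end

section
/- Let A ∈ ℝ^{q×q}, C ∈ ℝ^{p×q}, G ∈ ℝ^{q×k}, Q ∈ ℝ^{k×k} symmetric positive semidefinite, S ∈ ℝ^{k×p}, and R ∈ ℝ^{p×p} symmetric positive definite. Set A* = A − G·S·R⁻¹·C and B* = Q − S·R⁻¹·Sᵀ, and assume B* is positive semidefinite with square root B*^{1/2}. If the pair {A, C} is detectable and the pair {A*, G·B*^{1/2}} is stabilizable, then: for every symmetric positive semidefinite initial condition P_1, the generalized matrix difference Riccati recursion P_{t+1} = A·P_t·Aᵀ + G·Q·Gᵀ − (A·P_t·Cᵀ + G·S)·(R + C·P_t·Cᵀ)⁻¹·(A·P_t·Cᵀ + G·S)ᵀ is well defined (R + C·P_t·Cᵀ is positive definite for all t), and P_n converges as n → ∞ to a symmetric positive semidefinite matrix P which is the unique positive semidefinite solution of the algebraic Riccati equation P = A·P·Aᵀ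 + G·Q·Gᵀ − (A·P·Cᵀ + G·S)·(R + C·P·Cᵀ)⁻¹·(A·P·Cᵀ + G·S)ᵀ, and P is stabilizing, i.e. every complex eigenvalue of A − (A·P·Cᵀ + G·S)·(R + C·P·Cᵀ)⁻¹·C has modulus strictly less than 1. -/
/-!
The Riccati map `f = riccatiMap A C G Q S R` is the minimum over gains `L` of the affine maps
`gainMap L P = (A - L C) P (A - L C)ᵀ + gainNoise L`, attained at `L = riccatiGain P`
(completion of squares). Hence `f` preserves the positive semidefinite cone and is monotone on it.

Detectability gives a gain `K` for which `gainMap K` has a fixed point `X ≥ 0`, so the iterates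
`f^[t] 0` increase and stay below `X`; their limit `Pinf` solves the algebraic Riccati equation.
For the closed loop `F = A - riccatiGain Pinf * C` this equation reads
`Pinf = F Pinf Fᵀ + (G B)(G B)ᵀ + N R Nᵀ`, where `N = riccatiGain Pinf - G S R⁻¹` and
`B Bᵀ = Q - S R⁻¹ Sᵀ`. A left eigenvector of `F` for an eigenvalue of modulus `≥ 1` is therefore
annihilated by `G B` and by `N`, so it is a left eigenvector of `A - G S R⁻¹ C - G B K` for every
`K`, contradicting stabilizability.

Finally, `f P - Pinf ≤ gainMap L P - gainMap L Pinf = F (P - Pinf) Fᵀ` for `L = riccatiGain Pinf`,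
so from any `P 0 ≥ 0` we get `f^[t] 0 ≤ P t ≤ Pinf + F^t (P 0 - Pinf) (F^t)ᵀ`, and both bounds
tend to `Pinf`. Starting at another solution of the equation shows that it equals `Pinf`.
-/

open Matrix Filter Topology
open scoped MatrixOrder

namespace Matrix

lemma sub_mul_inv_mul_mul_transpose_sub {n m α : Type*} [CommRing α] [Fintype m]
    [DecidableEq m] {T : Matrix m m α} (hT : Tᵀ = T) (hTu : IsUnit T.det) (L M : Matrix n m α) :
    (L - M * T⁻¹) * T * (L - M * T⁻¹)ᵀ = L * T * Lᵀ - L * Mᵀ - M * Lᵀ + M * T⁻¹ * Mᵀ := by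
  have hTi : T⁻¹ᵀ = T⁻¹ := by rw [transpose_nonsing_inv, hT]
  simp only [transpose_sub, transpose_mul, hTi, Matrix.sub_mul, Matrix.mul_sub, Matrix.mul_assoc,
    mul_nonsing_inv_cancel_left _ _ hTu, nonsing_inv_mul_cancel_left _ _ hTu]
  abel

section LoewnerOrder

variable {n m : Type*}

lemma transpose_eq_self_of_nonneg {P : Matrix n n ℝ} (hP : 0 ≤ P) : Pᵀ = P :=
  (isHermitian_iff_isSymm.mp hP.posSemidef.isHermitian).eq

variable [Fintype n]

lemma mul_mul_transpose_nonneg [Finite m] {P : Matrix n n ℝ} (hP : 0 ≤ P) (N : Matrix m n ℝ) :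
    0 ≤ N * P * Nᵀ := by
  simpa using (hP.posSemidef.mul_mul_conjTranspose_same N).nonneg

lemma mul_mul_transpose_le_mul_mul_transpose [Finite m] {P₁ P₂ : Matrix n n ℝ} (h : P₁ ≤ P₂)
    (N : Matrix m n ℝ) : N * P₁ * Nᵀ ≤ N * P₂ * Nᵀ := by
  rw [← sub_nonneg, ← Matrix.sub_mul, ← Matrix.mul_sub]
  exact mul_mul_transpose_nonneg (sub_nonneg.mpr h) N

lemma posDef_add_mul_mul_transpose [Finite m] {R : Matrix m m ℝ} (hR : R.PosDef)
    {P : Matrix n n ℝ} (hP : 0 ≤ P) (C : Matrix m n ℝ) : (R + C * P * Cᵀ).PosDef :=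
  hR.add_posSemidef (mul_mul_transpose_nonneg hP C).posSemidef

lemma isClosed_setOf_nonneg : IsClosed {P : Matrix n n ℝ | 0 ≤ P} := by
  simp only [nonneg_iff_posSemidef, posSemidef_iff_dotProduct_mulVec, Set.ofPred_and,
    Set.ofPred_forall]
  exact (isClosed_eq (by fun_prop) continuous_id).inter <|
    isClosed_iInter fun x ↦ isClosed_le continuous_const (by fun_prop)

instance : OrderClosedTopology (Matrix n n ℝ) where
  isClosed_le' := by
    have : {p : Matrix n n ℝ × Matrix n n ℝ | p.1 ≤ p.2} = (fun p ↦ p.2 - p.1) ⁻¹' {P | 0 ≤ P} := by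
      ext p
      exact (sub_nonneg (a := p.2) (b := p.1)).symm
    exact this ▸ isClosed_setOf_nonneg.preimage (by fun_prop)

lemma dotProduct_mulVec_le_of_le {P P' : Matrix n n ℝ} (h : P ≤ P') (v : n → ℝ) :
    v ⬝ᵥ P *ᵥ v ≤ v ⬝ᵥ P' *ᵥ v := by
  simpa [sub_mulVec, dotProduct_sub] using (le_iff.mp h).dotProduct_mulVec_nonneg v

variable [DecidableEq n]

lemma IsHermitian.apply_eq_polarization {D : Matrix n n ℝ} (hD : D.IsHermitian) (i j : n) :
    D i j = ((Pi.single i 1 + Pi.single j 1) ⬝ᵥ D *ᵥ (Pi.single i 1 + Pi.single j 1) -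
      Pi.single i 1 ⬝ᵥ D *ᵥ Pi.single i 1 - Pi.single j 1 ⬝ᵥ D *ᵥ Pi.single j 1) / 2 := by
  have hji : D j i = D i j := by simpa using congr_fun₂ hD i j
  simp [mulVec_add, dotProduct_add, add_dotProduct, hji]
  ring

lemma tendsto_of_forall_tendsto_dotProduct_mulVec {D : ℕ → Matrix n n ℝ}
    (hD : ∀ t, (D t).IsHermitian) {ℓ : (n → ℝ) → ℝ}
    (h : ∀ v, Tendsto (fun t ↦ v ⬝ᵥ D t *ᵥ v) atTop (𝓝 (ℓ v))) :
    Tendsto D atTop (𝓝 (of fun i j ↦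
      (ℓ (Pi.single i 1 + Pi.single j 1) - ℓ (Pi.single i 1) - ℓ (Pi.single j 1)) / 2)) := by
  refine tendsto_pi_nhds.mpr fun i ↦ tendsto_pi_nhds.mpr fun j ↦ ?_
  simp only [fun t ↦ (hD t).apply_eq_polarization i j, of_apply]
  exact (((h _).sub (h _)).sub (h _)).div_const 2

lemma exists_tendsto_of_monotone {Z : ℕ → Matrix n n ℝ} (hZ : Monotone Z) {X : Matrix n n ℝ}
    (hX : ∀ t, Z t ≤ X) : ∃ L, Tendsto Z atTop (𝓝 L) := by
  have hD t : 0 ≤ Z t - Z 0 := sub_nonneg.mpr (hZ (Nat.zero_le t))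
  have hq v : Tendsto (fun t ↦ v ⬝ᵥ (Z t - Z 0) *ᵥ v) atTop
      (𝓝 (⨆ t, v ⬝ᵥ (Z t - Z 0) *ᵥ v)) :=
    tendsto_atTop_ciSup (fun s t hst ↦ dotProduct_mulVec_le_of_le (sub_le_sub_right (hZ hst) _) v)
      ⟨_, Set.forall_mem_range.mpr fun t ↦
        dotProduct_mulVec_le_of_le (sub_le_sub_right (hX t) (Z 0)) v⟩
  exact ⟨_, by simpa using (tendsto_of_forall_tendsto_dotProduct_mulVec
    (fun t ↦ (hD t).posSemidef.isHermitian) hq).const_add (Z 0)⟩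

lemma tendsto_of_tendsto_of_tendsto_of_le_of_le {X Y W : ℕ → Matrix n n ℝ} {L : Matrix n n ℝ}
    (hY : Tendsto Y atTop (𝓝 L)) (hW : Tendsto W atTop (𝓝 L)) (hYX : ∀ t, Y t ≤ X t)
    (hXW : ∀ t, X t ≤ W t) : Tendsto X atTop (𝓝 L) := by
  have hq v : Tendsto (fun t ↦ v ⬝ᵥ (X t - Y t) *ᵥ v) atTop (𝓝 0) := by
    have hWY : Tendsto (fun t ↦ v ⬝ᵥ (W t - Y t) *ᵥ v) atTop (𝓝 0) := by
      simpa [Function.comp_def] using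
        ((continuous_const.dotProduct (continuous_id.matrix_mulVec continuous_const)).tendsto
          (0 : Matrix n n ℝ)).comp (by simpa using hW.sub hY)
    exact _root_.tendsto_of_tendsto_of_tendsto_of_le_of_le tendsto_const_nhds hWY
      (fun t ↦ by simpa using dotProduct_mulVec_le_of_le (sub_nonneg.mpr (hYX t)) v)
      (fun t ↦ dotProduct_mulVec_le_of_le (sub_le_sub_right (hXW t) _) v)
  have hD := tendsto_of_forall_tendsto_dotProduct_mulVec
    (fun t ↦ (sub_nonneg.mpr (hYX t)).posSemidef.isHermitian) hq
  rw [show (of fun _ _ ↦ ((0 : ℝ) - 0 - 0) / 2 : Matrix n n ℝ) = 0 by ext; simp] at hD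
  simpa using hY.add hD

end LoewnerOrder

section Complexification

open scoped ComplexOrder

variable {n m k : Type*}

lemma map_ofReal_transpose (N : Matrix n m ℝ) :
    Nᵀ.map Complex.ofReal = (N.map Complex.ofReal)ᴴ := by
  ext; simp

lemma map_ofReal_mul [Fintype m] (X : Matrix n m ℝ) (Y : Matrix m k ℝ) :
    (X * Y).map Complex.ofReal = X.map Complex.ofReal * Y.map Complex.ofReal :=
  Matrix.map_mul (f := Complex.ofRealHom)

variable [Fintype n]

lemma PosSemidef.map_ofReal {P : Matrix n n ℝ} (hP : P.PosSemidef) :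
    (P.map Complex.ofReal).PosSemidef := by
  classical
  obtain ⟨B, rfl⟩ : ∃ B : Matrix n n ℝ, P = Bᵀ * B := by
    open scoped Matrix.Norms.L2Operator in
    simpa [star_eq_conjTranspose] using CStarAlgebra.nonneg_iff_eq_star_mul_self.mp hP.nonneg
  rw [map_ofReal_mul, map_ofReal_transpose]
  exact posSemidef_conjTranspose_mul_self _

lemma PosDef.map_ofReal [DecidableEq n] {P : Matrix n n ℝ} (hP : P.PosDef) :
    (P.map Complex.ofReal).PosDef :=
  hP.posSemidef.map_ofReal.posDef_iff_isUnit.mpr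
    (hP.isUnit.map (Complex.ofRealHom.mapMatrix (m := n)))

lemma mem_spectrum_iff_exists_vecMul_eq_smul [DecidableEq n] {K : Type*} [Field K]
    {N : Matrix n n K} {z : K} : z ∈ spectrum K N ↔ ∃ x ≠ 0, x ᵥ* N = z • x := by
  rw [spectrum.mem_iff, isUnit_iff_isUnit_det, isUnit_iff_ne_zero, not_not,
    ← exists_vecMul_eq_zero_iff]
  simp [vecMul_sub, sub_eq_zero, Algebra.algebraMap_eq_smul_one, vecMul_smul, eq_comm]

variable [Fintype m]

lemma star_dotProduct_mul_mul_conjTranspose_mulVec (N : Matrix n m ℂ) (D : Matrix m m ℂ)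
    (x : n → ℂ) : star x ⬝ᵥ (N * D * Nᴴ) *ᵥ x = star (Nᴴ *ᵥ x) ⬝ᵥ D *ᵥ (Nᴴ *ᵥ x) := by
  rw [star_mulVec, conjTranspose_conjTranspose, ← mulVec_mulVec, ← mulVec_mulVec,
    dotProduct_mulVec, ← dotProduct_mulVec]

lemma vecMul_eq_zero_of_eq_mul_mul_conjTranspose_add {F P W : Matrix n n ℂ} {N : Matrix n m ℂ}
    {D : Matrix m m ℂ} (hP : P.PosSemidef) (hD : D.PosDef) (hW : W.PosSemidef)
    (hPF : P = F * P * Fᴴ + N * D * Nᴴ + W) {z : ℂ} (hz : 1 ≤ ‖z‖) {x : n → ℂ}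
    (hx : x ᵥ* F = z • x) : x ᵥ* N = 0 := by
  -- pair the identity with `star x`, a right eigenvector of `Fᴴ`: `a = |z|² a + b + w`
  have h := congrArg (fun X ↦ star (star x) ⬝ᵥ X *ᵥ star x) hPF
  simp only [add_mulVec, dotProduct_add, star_dotProduct_mul_mul_conjTranspose_mulVec] at h
  rw [← star_vecMul, hx, star_smul, mulVec_smul, star_smul, smul_dotProduct, dotProduct_smul,
    ← star_vecMul, smul_smul, smul_eq_mul, star_star z] at h
  set a := star (star x) ⬝ᵥ P *ᵥ star x
  set b := star (star (x ᵥ* N)) ⬝ᵥ D *ᵥ star (x ᵥ* N)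
  set w := star (star x) ⬝ᵥ W *ᵥ star x
  have hz' : 1 ≤ z * star z := by
    rw [Complex.star_def, Complex.mul_conj, Complex.normSq_eq_norm_sq, ← Complex.ofReal_one,
      Complex.real_le_real]
    nlinarith
  have hb : b ≤ 0 := calc
    b ≤ b + w := le_add_of_nonneg_right (hW.dotProduct_mulVec_nonneg _)
    _ = (1 - z * star z) * a := by linear_combination -h
    _ ≤ 0 := mul_nonpos_of_nonpos_of_nonneg (sub_nonpos.mpr hz') (hP.dotProduct_mulVec_nonneg _)
  by_contra hN
  exact (hD.dotProduct_mulVec_pos (star_ne_zero.mpr hN)).not_ge hb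

end Complexification

end Matrix

lemma summable_norm_pow_of_forall_norm_lt_one {𝔸 : Type*} [NormedRing 𝔸] [NormedAlgebra ℂ 𝔸]
    [CompleteSpace 𝔸] {a : 𝔸} (ha : ∀ z ∈ spectrum ℂ a, ‖z‖ < 1) :
    Summable fun t : ℕ ↦ ‖a ^ t‖ := by
  cases subsingleton_or_nontrivial 𝔸
  · simp [Subsingleton.elim _ (0 : 𝔸), summable_zero]
  have hρ : spectralRadius ℂ a < 1 := by
    simpa using spectrum.spectralRadius_lt_of_forall_lt a (r := 1) fun z hz ↦ by
      simpa [← NNReal.coe_lt_coe] using ha z hz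
  obtain ⟨r, hρr, hr1⟩ := ENNReal.lt_iff_exists_nnreal_btwn.mp hρ
  have hev : ∀ᶠ t : ℕ in atTop, ‖a ^ t‖ ≤ (r : ℝ) ^ t := by
    filter_upwards [(spectrum.pow_nnnorm_pow_one_div_tendsto_nhds_spectralRadius a).eventually
      (gt_mem_nhds hρr), eventually_ge_atTop 1] with t ht ht1
    have := ENNReal.rpow_le_rpow ht.le (by positivity : (0 : ℝ) ≤ t)
    rw [← ENNReal.rpow_mul, one_div_mul_cancel (by positivity), ENNReal.rpow_one,
      ENNReal.rpow_natCast, ← ENNReal.coe_pow, ENNReal.coe_le_coe] at this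
    exact_mod_cast this
  exact Summable.of_norm_bounded_eventually_nat
    (summable_geometric_of_lt_one r.coe_nonneg (by exact_mod_cast hr1)) (by simpa using hev)

namespace Matrix

section SchurStable

variable {n : Type*} [Fintype n] [DecidableEq n]

def IsSchurStable (M : Matrix n n ℝ) : Prop :=
  ∀ z ∈ spectrum ℂ (M.map (Complex.ofReal : ℝ → ℂ)), ‖z‖ < 1

section Frobenius

open scoped Matrix.Norms.Frobenius

lemma frobenius_norm_mul_mul_transpose_le {m : Type*} [Fintype m] (N : Matrix m n ℝ)
    (D : Matrix n n ℝ) : ‖N * D * Nᵀ‖ ≤ ‖N‖ * (‖D‖ * ‖N‖) := by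
  calc ‖N * D * Nᵀ‖ ≤ ‖N * D‖ * ‖Nᵀ‖ := frobenius_norm_mul _ _
    _ ≤ ‖N‖ * ‖D‖ * ‖N‖ := by
      rw [frobenius_norm_transpose]
      gcongr
      exact frobenius_norm_mul _ _
    _ = ‖N‖ * (‖D‖ * ‖N‖) := mul_assoc _ _ _

variable {M : Matrix n n ℝ} (hM : IsSchurStable M)
include hM

lemma IsSchurStable.summable_norm_pow : Summable fun t : ℕ ↦ ‖M ^ t‖ := by
  refine (summable_norm_pow_of_forall_norm_lt_one hM).congr fun t ↦ ?_
  have h : (M ^ t).map Complex.ofReal = M.map Complex.ofReal ^ t :=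
    Matrix.map_pow M Complex.ofRealHom t
  rw [← h, frobenius_norm_map_eq _ _ Complex.norm_real]

lemma IsSchurStable.tendsto_pow_mul_mul_transpose (D : Matrix n n ℝ) :
    Tendsto (fun t : ℕ ↦ M ^ t * D * (M ^ t)ᵀ) atTop (𝓝 0) := by
  have h := hM.summable_norm_pow.tendsto_atTop_zero
  refine squeeze_zero_norm (fun t ↦ frobenius_norm_mul_mul_transpose_le _ D) ?_
  simpa using h.mul (h.const_mul ‖D‖)

lemma IsSchurStable.summable_pow_mul_mul_transpose (D : Matrix n n ℝ) :
    Summable fun t : ℕ ↦ M ^ t * D * (M ^ t)ᵀ := by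
  obtain ⟨B, hB⟩ := hM.summable_norm_pow.tendsto_atTop_zero.bddAbove_range
  refine Summable.of_norm_bounded (hM.summable_norm_pow.mul_right (‖D‖ * B)) fun t ↦
    (frobenius_norm_mul_mul_transpose_le _ D).trans ?_
  gcongr
  exact hB ⟨t, rfl⟩

end Frobenius

lemma IsSchurStable.exists_nonneg_mul_mul_transpose_add_eq {M : Matrix n n ℝ}
    (hM : IsSchurStable M) {Γ : Matrix n n ℝ} (hΓ : 0 ≤ Γ) :
    ∃ X, 0 ≤ X ∧ M * X * Mᵀ + Γ = X := by
  have hs := hM.summable_pow_mul_mul_transpose Γ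
  refine ⟨∑' t, M ^ t * Γ * (M ^ t)ᵀ, tsum_nonneg fun t ↦ mul_mul_transpose_nonneg hΓ _, ?_⟩
  have hsucc t : M ^ (t + 1) * Γ * (M ^ (t + 1))ᵀ = M * (M ^ t * Γ * (M ^ t)ᵀ) * Mᵀ := by
    simp only [pow_succ', transpose_mul, Matrix.mul_assoc]
  conv_rhs => rw [hs.tsum_eq_zero_add]
  rw [← hs.tsum_mul_left, ← (hs.mul_left M).tsum_mul_right]
  simp only [hsucc, pow_zero, transpose_one, Matrix.one_mul, Matrix.mul_one, add_comm]

open scoped ComplexOrder in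
lemma IsSchurStable.of_eq_mul_mul_transpose_add {k m : Type*} [Fintype k] [Fintype m]
    [DecidableEq k] [DecidableEq m] {F P : Matrix n n ℝ} {N₁ : Matrix n k ℝ} {N₂ : Matrix n m ℝ}
    {D₁ : Matrix k k ℝ} {D₂ : Matrix m m ℝ} (hP : 0 ≤ P) (hD₁ : D₁.PosDef) (hD₂ : D₂.PosDef)
    (hPF : P = F * P * Fᵀ + N₁ * D₁ * N₁ᵀ + N₂ * D₂ * N₂ᵀ) {K₁ : Matrix k n ℝ}
    {K₂ : Matrix m n ℝ} (hK : IsSchurStable (F + N₁ * K₁ + N₂ * K₂)) : IsSchurStable F := by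
  intro z hz
  by_contra! hz1
  obtain ⟨x, hx0, hx⟩ := mem_spectrum_iff_exists_vecMul_eq_smul.mp hz
  have hPFc := congrArg (Matrix.map · Complex.ofReal) hPF
  simp only [Matrix.map_add _ Complex.ofReal_add, map_ofReal_mul, map_ofReal_transpose] at hPFc
  have hP' := hP.posSemidef.map_ofReal
  have h₁ : x ᵥ* N₁.map Complex.ofReal = 0 :=
    vecMul_eq_zero_of_eq_mul_mul_conjTranspose_add hP' hD₁.map_ofReal
      (hD₂.map_ofReal.posSemidef.mul_mul_conjTranspose_same _) hPFc hz1 hx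
  have h₂ : x ᵥ* N₂.map Complex.ofReal = 0 :=
    vecMul_eq_zero_of_eq_mul_mul_conjTranspose_add hP' hD₂.map_ofReal
      (hD₁.map_ofReal.posSemidef.mul_mul_conjTranspose_same _)
      (hPFc.trans (add_right_comm _ _ _)) hz1 hx
  refine (hK z (mem_spectrum_iff_exists_vecMul_eq_smul.mpr ⟨x, hx0, ?_⟩)).not_ge hz1
  simp only [Matrix.map_add _ Complex.ofReal_add, map_ofReal_mul, vecMul_add, ← vecMul_vecMul,
    h₁, h₂, hx, zero_vecMul, add_zero]

end SchurStable

end Matrix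

section Riccati

variable {n m k : Type*} [Fintype n] [Fintype m] [Fintype k]
variable (A : Matrix n n ℝ) (C : Matrix m n ℝ) (G : Matrix n k ℝ) (Q : Matrix k k ℝ)
  (S : Matrix k m ℝ) (R : Matrix m m ℝ)

def gainNoise (L : Matrix n m ℝ) : Matrix n n ℝ :=
  G * Q * Gᵀ - G * S * Lᵀ - L * Sᵀ * Gᵀ + L * R * Lᵀ

/-- The error-covariance update of the one-step predictor with the fixed gain `L`. -/
def gainMap (L : Matrix n m ℝ) (P : Matrix n n ℝ) : Matrix n n ℝ :=
  (A - L * C) * P * (A - L * C)ᵀ + gainNoise G Q S R L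

variable [DecidableEq m]

noncomputable def riccatiMap (P : Matrix n n ℝ) : Matrix n n ℝ :=
  A * P * Aᵀ + G * Q * Gᵀ -
    (A * P * Cᵀ + G * S) * (R + C * P * Cᵀ)⁻¹ * (A * P * Cᵀ + G * S)ᵀ

noncomputable def riccatiGain (P : Matrix n n ℝ) : Matrix n m ℝ :=
  (A * P * Cᵀ + G * S) * (R + C * P * Cᵀ)⁻¹

variable {A C G Q S R}

omit [DecidableEq m] in
lemma gainMap_sub_gainMap (L : Matrix n m ℝ) (P₁ P₂ : Matrix n n ℝ) :
    gainMap A C G Q S R L P₁ - gainMap A C G Q S R L P₂ =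
      (A - L * C) * (P₁ - P₂) * (A - L * C)ᵀ := by
  simp only [gainMap, Matrix.mul_sub, Matrix.sub_mul]
  abel

omit [DecidableEq m] in
lemma gainMap_mono (L : Matrix n m ℝ) {P₁ P₂ : Matrix n n ℝ} (h : P₁ ≤ P₂) :
    gainMap A C G Q S R L P₁ ≤ gainMap A C G Q S R L P₂ :=
  add_le_add_left (mul_mul_transpose_le_mul_mul_transpose h _) _

omit [Fintype n] in
lemma gainNoise_eq (hR : R.PosDef) (L : Matrix n m ℝ) :
    gainNoise G Q S R L =
      G * (Q - S * R⁻¹ * Sᵀ) * Gᵀ + (L - G * S * R⁻¹) * R * (L - G * S * R⁻¹)ᵀ := by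
  rw [sub_mul_inv_mul_mul_transpose_sub (transpose_eq_self_of_nonneg hR.posSemidef.nonneg)
    ((isUnit_iff_isUnit_det _).mp hR.isUnit), gainNoise]
  simp only [transpose_mul, Matrix.mul_sub, Matrix.sub_mul, Matrix.mul_assoc]
  abel

lemma gainNoise_nonneg (hR : R.PosDef) (hSQ : S * R⁻¹ * Sᵀ ≤ Q) (L : Matrix n m ℝ) :
    0 ≤ gainNoise G Q S R L := by
  rw [gainNoise_eq hR]
  exact add_nonneg (mul_mul_transpose_nonneg (sub_nonneg.mpr hSQ) G)
    (mul_mul_transpose_nonneg hR.posSemidef.nonneg _)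

lemma gainMap_eq_riccatiMap_add (hR : R.PosDef) {P : Matrix n n ℝ} (hP : 0 ≤ P)
    (L : Matrix n m ℝ) :
    gainMap A C G Q S R L P = riccatiMap A C G Q S R P +
      (L - riccatiGain A C G S R P) * (R + C * P * Cᵀ) * (L - riccatiGain A C G S R P)ᵀ := by
  have hT := posDef_add_mul_mul_transpose hR hP C
  rw [riccatiGain, sub_mul_inv_mul_mul_transpose_sub
    (transpose_eq_self_of_nonneg hT.posSemidef.nonneg) ((isUnit_iff_isUnit_det _).mp hT.isUnit),
    gainMap, gainNoise, riccatiMap]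
  simp only [transpose_add, transpose_sub, transpose_mul, transpose_transpose,
    transpose_eq_self_of_nonneg hP, Matrix.sub_mul, Matrix.mul_sub, Matrix.add_mul,
    Matrix.mul_add, Matrix.mul_assoc]
  abel

lemma riccatiMap_eq_gainMap (hR : R.PosDef) {P : Matrix n n ℝ} (hP : 0 ≤ P) :
    riccatiMap A C G Q S R P = gainMap A C G Q S R (riccatiGain A C G S R P) P := by
  simp [gainMap_eq_riccatiMap_add hR hP]

lemma riccatiMap_le_gainMap (hR : R.PosDef) {P : Matrix n n ℝ} (hP : 0 ≤ P) (L : Matrix n m ℝ) :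
    riccatiMap A C G Q S R P ≤ gainMap A C G Q S R L P := by
  rw [gainMap_eq_riccatiMap_add hR hP]
  exact le_add_of_nonneg_right
    (mul_mul_transpose_nonneg (posDef_add_mul_mul_transpose hR hP C).posSemidef.nonneg _)

lemma riccatiMap_nonneg (hR : R.PosDef) (hSQ : S * R⁻¹ * Sᵀ ≤ Q) {P : Matrix n n ℝ}
    (hP : 0 ≤ P) : 0 ≤ riccatiMap A C G Q S R P := by
  rw [riccatiMap_eq_gainMap hR hP]
  exact add_nonneg (mul_mul_transpose_nonneg hP _) (gainNoise_nonneg hR hSQ _)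

lemma riccatiMap_mono (hR : R.PosDef) {P₁ P₂ : Matrix n n ℝ} (hP₁ : 0 ≤ P₁) (h : P₁ ≤ P₂) :
    riccatiMap A C G Q S R P₁ ≤ riccatiMap A C G Q S R P₂ := by
  rw [riccatiMap_eq_gainMap hR (hP₁.trans h)]
  exact (riccatiMap_le_gainMap hR hP₁ _).trans (gainMap_mono _ h)

lemma riccatiMap_sub_le (hR : R.PosDef) {P P' : Matrix n n ℝ} (hP : 0 ≤ P) (hP' : 0 ≤ P') :
    riccatiMap A C G Q S R P - riccatiMap A C G Q S R P' ≤
      (A - riccatiGain A C G S R P' * C) * (P - P') * (A - riccatiGain A C G S R P' * C)ᵀ := by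
  rw [← gainMap_sub_gainMap (Q := Q), riccatiMap_eq_gainMap hR hP']
  exact sub_le_sub_right (riccatiMap_le_gainMap hR hP _) _

lemma continuousAt_riccatiMap (hR : R.PosDef) {P : Matrix n n ℝ} (hP : 0 ≤ P) :
    ContinuousAt (riccatiMap A C G Q S R) P := by
  have hinv : ContinuousAt (fun X : Matrix n n ℝ ↦ (R + C * X * Cᵀ)⁻¹) P := by
    refine (continuousAt_matrix_inv _ ?_).comp (f := fun X ↦ R + C * X * Cᵀ) (by fun_prop)
    rw [Ring.inverse_eq_inv']
    exact continuousAt_inv₀ (posDef_add_mul_mul_transpose hR hP C).det_pos.ne'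
  unfold riccatiMap
  fun_prop

lemma nonneg_of_riccatiMap_succ (hR : R.PosDef) (hSQ : S * R⁻¹ * Sᵀ ≤ Q)
    {P : ℕ → Matrix n n ℝ} (hP₀ : 0 ≤ P 0) (hP : ∀ t, P (t + 1) = riccatiMap A C G Q S R (P t))
    (t : ℕ) : 0 ≤ P t := by
  induction t with
  | zero => exact hP₀
  | succ t ih => exact hP t ▸ riccatiMap_nonneg hR hSQ ih

lemma riccatiMap_iterate_nonneg (hR : R.PosDef) (hSQ : S * R⁻¹ * Sᵀ ≤ Q) {P : Matrix n n ℝ}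
    (hP : 0 ≤ P) (t : ℕ) : 0 ≤ (riccatiMap A C G Q S R)^[t] P :=
  nonneg_of_riccatiMap_succ (P := fun t ↦ (riccatiMap A C G Q S R)^[t] P) hR hSQ hP
    (fun t ↦ Function.iterate_succ_apply' _ t P) t

lemma exists_tendsto_riccatiMap_iterate_zero [DecidableEq n] (hR : R.PosDef)
    (hSQ : S * R⁻¹ * Sᵀ ≤ Q) {K : Matrix n m ℝ} (hK : IsSchurStable (A - K * C)) :
    ∃ Pinf, 0 ≤ Pinf ∧ riccatiMap A C G Q S R Pinf = Pinf ∧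
      Tendsto (fun t ↦ (riccatiMap A C G Q S R)^[t] 0) atTop (𝓝 Pinf) := by
  set f := riccatiMap A C G Q S R
  have hnn t : 0 ≤ f^[t] 0 := riccatiMap_iterate_nonneg hR hSQ le_rfl t
  have hmono : Monotone fun t ↦ f^[t] 0 := by
    refine monotone_nat_of_le_succ fun t ↦ ?_
    induction t with
    | zero => exact riccatiMap_nonneg hR hSQ le_rfl
    | succ t ih =>
      conv_lhs => rw [Function.iterate_succ_apply']
      rw [Function.iterate_succ_apply' f (t + 1)]
      exact riccatiMap_mono hR (hnn t) ih
  obtain ⟨X, hX, hXfix⟩ := hK.exists_nonneg_mul_mul_transpose_add_eq (gainNoise_nonneg hR hSQ K)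
  have hbdd t : f^[t] 0 ≤ X := by
    induction t with
    | zero => exact hX
    | succ t ih =>
      rw [Function.iterate_succ_apply', ← hXfix]
      exact (riccatiMap_le_gainMap hR (hnn t) K).trans (gainMap_mono K ih)
  obtain ⟨Pinf, hlim⟩ := exists_tendsto_of_monotone hmono hbdd
  have hPinf : 0 ≤ Pinf := ge_of_tendsto' hlim hnn
  exact ⟨Pinf, hPinf, isFixedPt_of_tendsto_iterate hlim (continuousAt_riccatiMap hR hPinf), hlim⟩

lemma isSchurStable_of_riccatiMap_eq [DecidableEq n] {l : Type*} [Fintype l]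
    [DecidableEq l] (hR : R.PosDef) {B : Matrix k l ℝ} (hB : B * Bᵀ = Q - S * R⁻¹ * Sᵀ)
    {K : Matrix l n ℝ} (hK : IsSchurStable (A - G * S * R⁻¹ * C - G * B * K))
    {P : Matrix n n ℝ} (hP : 0 ≤ P) (hfix : riccatiMap A C G Q S R P = P) :
    IsSchurStable (A - riccatiGain A C G S R P * C) := by
  set L := riccatiGain A C G S R P with hL
  have hPF : P = (A - L * C) * P * (A - L * C)ᵀ + G * B * (1 : Matrix l l ℝ) * (G * B)ᵀ +
      (L - G * S * R⁻¹) * R * (L - G * S * R⁻¹)ᵀ := by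
    conv_lhs => rw [← hfix, riccatiMap_eq_gainMap hR hP, ← hL, gainMap, gainNoise_eq hR, ← hB]
    simp only [Matrix.mul_one, transpose_mul, Matrix.mul_assoc, add_assoc]
  refine IsSchurStable.of_eq_mul_mul_transpose_add hP PosDef.one hR hPF (K₁ := -K) (K₂ := C) ?_
  convert hK using 1
  simp only [Matrix.sub_mul, Matrix.mul_neg]
  abel

lemma tendsto_of_riccatiMap_succ [DecidableEq n] (hR : R.PosDef) (hSQ : S * R⁻¹ * Sᵀ ≤ Q)
    {Pinf : Matrix n n ℝ} (hPinf : 0 ≤ Pinf) (hfix : riccatiMap A C G Q S R Pinf = Pinf)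
    (hlim : Tendsto (fun t ↦ (riccatiMap A C G Q S R)^[t] 0) atTop (𝓝 Pinf))
    (hstab : IsSchurStable (A - riccatiGain A C G S R Pinf * C)) {P : ℕ → Matrix n n ℝ}
    (hP₀ : 0 ≤ P 0) (hP : ∀ t, P (t + 1) = riccatiMap A C G Q S R (P t)) :
    Tendsto P atTop (𝓝 Pinf) := by
  set f := riccatiMap A C G Q S R
  set F := A - riccatiGain A C G S R Pinf * C
  have hlower t : f^[t] 0 ≤ P t := by
    induction t with
    | zero => exact hP₀
    | succ t ih =>
      rw [Function.iterate_succ_apply', hP]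
      exact riccatiMap_mono hR (riccatiMap_iterate_nonneg hR hSQ le_rfl t) ih
  have hupper t : P t - Pinf ≤ F ^ t * (P 0 - Pinf) * (F ^ t)ᵀ := by
    induction t with
    | zero => simp
    | succ t ih =>
      calc P (t + 1) - Pinf = f (P t) - f Pinf := by rw [hP, hfix]
        _ ≤ F * (P t - Pinf) * Fᵀ :=
          riccatiMap_sub_le hR (nonneg_of_riccatiMap_succ hR hSQ hP₀ hP t) hPinf
        _ ≤ F * (F ^ t * (P 0 - Pinf) * (F ^ t)ᵀ) * Fᵀ :=
          mul_mul_transpose_le_mul_mul_transpose ih F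
        _ = F ^ (t + 1) * (P 0 - Pinf) * (F ^ (t + 1))ᵀ := by
          simp only [pow_succ', transpose_mul, Matrix.mul_assoc]
  refine Matrix.tendsto_of_tendsto_of_tendsto_of_le_of_le hlim ?_ hlower
    fun t ↦ sub_le_iff_le_add'.mp (hupper t)
  simpa using (hstab.tendsto_pow_mul_mul_transpose (P 0 - Pinf)).const_add Pinf

end Riccati

theorem stmt_17_general (q p k : ℕ)
    (A : Matrix (Fin q) (Fin q) ℝ) (C : Matrix (Fin p) (Fin q) ℝ)
    (G : Matrix (Fin q) (Fin k) ℝ) (Q : Matrix (Fin k) (Fin k) ℝ)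
    (S : Matrix (Fin k) (Fin p) ℝ) (R : Matrix (Fin p) (Fin p) ℝ)
    (hR : R.PosDef)
    (Bhalf : Matrix (Fin k) (Fin k) ℝ)
    (hBstar : (Q - S * R⁻¹ * Sᵀ).PosSemidef)
    (hBhalf : Bhalf * Bhalfᵀ = Q - S * R⁻¹ * Sᵀ)
    (hdet : ∃ K : Matrix (Fin q) (Fin p) ℝ,
      ∀ z ∈ spectrum ℂ ((A - K * C).map (Complex.ofReal : ℝ → ℂ)),
        ‖z‖ < 1)
    (hstab : ∃ K : Matrix (Fin k) (Fin q) ℝ,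
      ∀ z ∈ spectrum ℂ
        (((A - G * S * R⁻¹ * C) - G * Bhalf * K).map (Complex.ofReal : ℝ → ℂ)),
        ‖z‖ < 1) :
    ∀ P : ℕ → Matrix (Fin q) (Fin q) ℝ, (P 0).PosSemidef →
    (∀ t, P (t + 1) = A * P t * Aᵀ + G * Q * Gᵀ -
      (A * P t * Cᵀ + G * S) * (R + C * P t * Cᵀ)⁻¹ * (A * P t * Cᵀ + G * S)ᵀ) →
    (∀ t, (R + C * P t * Cᵀ).PosDef) ∧
    ∃ Pinf : Matrix (Fin q) (Fin q) ℝ,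
      Pinf.PosSemidef ∧
      Pinf = A * Pinf * Aᵀ + G * Q * Gᵀ -
        (A * Pinf * Cᵀ + G * S) * (R + C * Pinf * Cᵀ)⁻¹ * (A * Pinf * Cᵀ + G * S)ᵀ ∧
      (∀ P' : Matrix (Fin q) (Fin q) ℝ, P'.PosSemidef →
        P' = A * P' * Aᵀ + G * Q * Gᵀ -
          (A * P' * Cᵀ + G * S) * (R + C * P' * Cᵀ)⁻¹ * (A * P' * Cᵀ + G * S)ᵀ →
        P' = Pinf) ∧
      (∀ z ∈ spectrum ℂ
        ((A - (A * Pinf * Cᵀ + G * S) * (R + C * Pinf * Cᵀ)⁻¹ * C).map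
          (Complex.ofReal : ℝ → ℂ)),
        ‖z‖ < 1) ∧
      Filter.Tendsto P Filter.atTop (nhds Pinf) := by
  intro P hP₀ hP
  obtain ⟨K, hK⟩ := hdet
  obtain ⟨K', hK'⟩ := hstab
  obtain ⟨Pinf, hPinf, hfix, hlim⟩ := exists_tendsto_riccatiMap_iterate_zero hR hBstar hK
  have hstable := isSchurStable_of_riccatiMap_eq hR hBhalf hK' hPinf hfix
  have hconv (P' : ℕ → Matrix (Fin q) (Fin q) ℝ) :=
    tendsto_of_riccatiMap_succ (P := P') hR hBstar hPinf hfix hlim hstable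
  refine ⟨fun t ↦ posDef_add_mul_mul_transpose hR
    (nonneg_of_riccatiMap_succ hR hBstar hP₀.nonneg hP t) C, Pinf, hPinf.posSemidef, hfix.symm,
    fun P' hP' hP'fix ↦ ?_, hstable, hconv P hP₀.nonneg hP⟩
  exact tendsto_nhds_unique tendsto_const_nhds (hconv (fun _ ↦ P') hP'.nonneg fun _ ↦ hP'fix)

/-- convergence of the generalized matrix difference Riccati equation to
the unique positive semidefinite stabilizing solution of the algebraic Riccati equation,
under detectability of `{A, C}` and stabilizability of `{A*, G·B*^{1/2}}`,
where `A* = A - G·S·R⁻¹·C` and `B* = Q - S·R⁻¹·Sᵀ = B*^{1/2}·(B*^{1/2})ᵀ`. -/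
theorem stmt_17 (q p k : ℕ)
    (A : Matrix (Fin q) (Fin q) ℝ) (C : Matrix (Fin p) (Fin q) ℝ)
    (G : Matrix (Fin q) (Fin k) ℝ) (Q : Matrix (Fin k) (Fin k) ℝ)
    (S : Matrix (Fin k) (Fin p) ℝ) (R : Matrix (Fin p) (Fin p) ℝ)
    (hQ : Q.PosSemidef) (hR : R.PosDef)
    (Bhalf : Matrix (Fin k) (Fin k) ℝ)
    (hBstar : (Q - S * R⁻¹ * Sᵀ).PosSemidef)
    (hBhalf : Bhalf * Bhalfᵀ = Q - S * R⁻¹ * Sᵀ)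
    (hdet : ∃ K : Matrix (Fin q) (Fin p) ℝ,
      ∀ z ∈ spectrum ℂ ((A - K * C).map (Complex.ofReal : ℝ → ℂ)),
        ‖z‖ < 1)
    (hstab : ∃ K : Matrix (Fin k) (Fin q) ℝ,
      ∀ z ∈ spectrum ℂ
        (((A - G * S * R⁻¹ * C) - G * Bhalf * K).map (Complex.ofReal : ℝ → ℂ)),
        ‖z‖ < 1) :
    ∀ P : ℕ → Matrix (Fin q) (Fin q) ℝ, (P 0).PosSemidef →
    (∀ t, P (t + 1) = A * P t * Aᵀ + G * Q * Gᵀ -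
      (A * P t * Cᵀ + G * S) * (R + C * P t * Cᵀ)⁻¹ * (A * P t * Cᵀ + G * S)ᵀ) →
    (∀ t, (R + C * P t * Cᵀ).PosDef) ∧
    ∃ Pinf : Matrix (Fin q) (Fin q) ℝ,
      Pinf.PosSemidef ∧
      Pinf = A * Pinf * Aᵀ + G * Q * Gᵀ -
        (A * Pinf * Cᵀ + G * S) * (R + C * Pinf * Cᵀ)⁻¹ * (A * Pinf * Cᵀ + G * S)ᵀ ∧
      (∀ P' : Matrix (Fin q) (Fin q) ℝ, P'.PosSemidef →
        P' = A * P' * Aᵀ + G * Q * Gᵀ -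
          (A * P' * Cᵀ + G * S) * (R + C * P' * Cᵀ)⁻¹ * (A * P' * Cᵀ + G * S)ᵀ →
        P' = Pinf) ∧
      (∀ z ∈ spectrum ℂ
        ((A - (A * Pinf * Cᵀ + G * S) * (R + C * Pinf * Cᵀ)⁻¹ * C).map
          (Complex.ofReal : ℝ → ℂ)),
        ‖z‖ < 1) ∧
      Filter.Tendsto P Filter.atTop (nhds Pinf) :=
  stmt_17_general q p k A C G Q S R hR Bhalf hBstar hBhalf hdet hstab
end

section
/- Let A ∈ ℝ^{q×q} and C ∈ ℝ^{p×q}. The pair {A, C} is detectable (i.e. there exists K ∈ ℝ^{q×p} such that every complex eigenvalue of A − K·C has modulus strictly less than 1) if and only if there exists no pair (λ, x) with λ ∈ ℂ, x ∈ ℂ^q, x ≠ 0, such that A·x = λ·x (for the complexification of A), |λ| ≥ 1, and C·x = 0 (for the complexification of C). -/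
/-!
If `C x = 0` and `A x = λ x`, then `(A - K C) x = λ x` for every `K`, so detectability excludes
such eigenpairs with `|λ| ≥ 1`. Conversely, some real `K` gives a deadbeat observer,
`C (A - K C)^q = 0`, dual to a state feedback driving every reachable state to `0` in `q` steps,
which exists for every pair. An eigenvector `x` of `A - K C` with eigenvalue `z ≠ 0` then has
`z^q C x = 0`, so `C x = 0`, `A x = z x`, and the hypothesis forces `|z| < 1`.
-/

open Matrix

namespace LinearMap

variable {K U V W : Type*} [Field K] [AddCommGroup U] [Module K U] [AddCommGroup V] [Module K V]
  [AddCommGroup W] [Module K W]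

theorem pow_comp_comp_eq_comp_pow (j : W →ₗ[K] V) (c : V →ₗ[K] W) (n : ℕ) :
    ((j ∘ₗ c) ^ n) ∘ₗ j = j ∘ₗ (c ∘ₗ j) ^ n := by
  induction n with
  | zero => rfl
  | succ n ih =>
    calc ((j ∘ₗ c) ^ (n + 1)) ∘ₗ j = (((j ∘ₗ c) ^ n) ∘ₗ j) ∘ₗ (c ∘ₗ j) := by
          rw [pow_succ, Module.End.mul_eq_comp]; rfl
      _ = j ∘ₗ (c ∘ₗ j) ^ (n + 1) := by rw [ih, pow_succ, Module.End.mul_eq_comp]; rfl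

theorem exists_comp_eq_of_range_le (b : U →ₗ[K] V) (φ : W →ₗ[K] V) (h : range φ ≤ range b) :
    ∃ f : W →ₗ[K] U, b ∘ₗ f = φ := by
  obtain ⟨f, hf⟩ := Module.projective_lifting_property b.rangeRestrict
    (φ.codRestrict _ fun w => h ⟨w, rfl⟩) b.surjective_rangeRestrict
  exact ⟨f, ext fun w => congrArg Subtype.val congr($hf w)⟩

/- Induction on `n`: split `V = range b ⊕ Y` and let `c` be `a` followed by the projection onto
`Y`. Feedback sets the `range b`-component of the next state freely, while the `Y`-component
follows the reduced pair `(c ∘ Y.subtype, c ∘ b)` on `Y`. Given a deadbeat feedback `f'` for the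
reduced pair, the closed loop can be made equal to `j ∘ c` with `j = Y.subtype + b ∘ f'`, and
`(j ∘ c)^(n+1) ∘ b = j ∘ (c ∘ j)^n ∘ (c ∘ b) = 0`. -/
theorem exists_pow_add_comp_comp_eq_zero [FiniteDimensional K V] (n : ℕ)
    (hn : Module.finrank K V ≤ n) (a : V →ₗ[K] V) (b : U →ₗ[K] V) :
    ∃ f : V →ₗ[K] U, ((a + b ∘ₗ f) ^ n) ∘ₗ b = 0 := by
  induction n generalizing V with
  | zero =>
    have : Subsingleton V := (Module.finrank_zero_iff (R := K)).mp (by omega)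
    exact ⟨0, ext fun _ => Subsingleton.elim _ _⟩
  | succ n ih =>
    by_cases hb : range b = ⊥
    · exact ⟨0, by rw [range_eq_bot.mp hb, comp_zero]⟩
    obtain ⟨Y, hY⟩ := (range b).exists_isCompl
    have hYn : Module.finrank K Y ≤ n := by
      have := Submodule.finrank_add_eq_of_isCompl hY
      have := Submodule.finrank_eq_zero.not.mpr hb
      omega
    set c := Y.projectionOnto (range b) hY.symm ∘ₗ a
    obtain ⟨f', hf'⟩ := ih hYn (c ∘ₗ Y.subtype) (c ∘ₗ b)
    obtain ⟨s, hs⟩ := exists_comp_eq_of_range_le b ((range b).projection Y hY ∘ₗ a)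
      ((range_comp_le_range _ _).trans (Submodule.range_projection hY).le)
    set j := Y.subtype + b ∘ₗ f'
    refine ⟨f' ∘ₗ c - s, ?_⟩
    have hYc : Y.subtype ∘ₗ c = a - b ∘ₗ s := by
      rw [hs, ← comp_assoc, ← Submodule.projection.eq_def,
        Submodule.projection_eq_id_sub_projection hY, sub_comp, id_comp]
    have hclosed : a + b ∘ₗ (f' ∘ₗ c - s) = j ∘ₗ c := by
      rw [add_comp, hYc, comp_sub, comp_assoc]
      abel
    have hreduced : c ∘ₗ Y.subtype + (c ∘ₗ b) ∘ₗ f' = c ∘ₗ j := by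
      simp only [j, comp_add, comp_assoc]
    rw [hreduced] at hf'
    rw [hclosed, pow_succ, Module.End.mul_eq_comp, comp_assoc, comp_assoc, ← comp_assoc (c ∘ₗ b),
      pow_comp_comp_eq_comp_pow, comp_assoc, hf', comp_zero]

end LinearMap

namespace Matrix

variable {m n : Type*} [Fintype n]

theorem exists_mul_pow_sub_mul_eq_zero [Fintype m] [DecidableEq n] {K : Type*} [Field K]
    (A : Matrix n n K) (C : Matrix m n K) :
    ∃ L : Matrix n m K, C * (A - L * C) ^ Fintype.card n = 0 := by
  classical
  obtain ⟨f, hf⟩ := LinearMap.exists_pow_add_comp_comp_eq_zero (Fintype.card n)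
    (Module.finrank_fintype_fun_eq_card K).le (toLin' Aᵀ) (toLin' Cᵀ)
  refine ⟨-(LinearMap.toMatrix' f)ᵀ, ?_⟩
  have h : (Aᵀ + Cᵀ * LinearMap.toMatrix' f) ^ Fintype.card n * Cᵀ = 0 := by
    apply toLin'.injective
    rw [toLin'_mul, toLin'_pow, map_add, toLin'_mul, toLin'_toMatrix', map_zero]
    exact hf
  simpa [transpose_pow, sub_eq_add_neg] using congrArg transpose h

theorem map_sub_mul_mulVec_of_mulVec_eq_zero [Fintype m] {R S : Type*} [CommRing R] [CommRing S]
    (f : R →+* S) {A : Matrix n n R} {L : Matrix n m R} {C : Matrix m n R} {x : n → S}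
    (hx : C.map f *ᵥ x = 0) : (A - L * C).map f *ᵥ x = A.map f *ᵥ x := by
  rw [Matrix.map_sub _ (map_sub f), Matrix.map_mul, sub_mulVec, ← mulVec_mulVec, hx, mulVec_zero,
    sub_zero]

theorem map_mul_pow_eq_zero [DecidableEq n] {R S : Type*} [CommRing R] [CommRing S]
    (f : R →+* S) {C : Matrix m n R} {M : Matrix n n R} {k : ℕ} (h : C * M ^ k = 0) :
    C.map f * (M.map f) ^ k = 0 := by
  rw [← f.mapMatrix_apply, ← map_pow, RingHom.mapMatrix_apply, ← Matrix.map_mul, h,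
    Matrix.map_zero _ (map_zero f)]

theorem pow_mulVec_of_mulVec_eq_smul [DecidableEq n] {R : Type*} [CommSemiring R]
    {M : Matrix n n R} {x : n → R} {z : R} (hx : M *ᵥ x = z • x) (k : ℕ) :
    (M ^ k) *ᵥ x = z ^ k • x := by
  induction k with
  | zero => simp
  | succ k ih => rw [pow_succ', ← mulVec_mulVec, ih, mulVec_smul, hx, smul_smul, pow_succ]

theorem mulVec_eq_zero_of_mul_pow_eq_zero [DecidableEq n] {K : Type*} [Field K]
    {C : Matrix m n K} {M : Matrix n n K} {k : ℕ} (h : C * M ^ k = 0) {x : n → K} {z : K}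
    (hx : M *ᵥ x = z • x) (hz : z ≠ 0) : C *ᵥ x = 0 := by
  have h' := congrArg (· *ᵥ x) h
  simp only [← mulVec_mulVec, pow_mulVec_of_mulVec_eq_smul hx, mulVec_smul, zero_mulVec] at h'
  exact (smul_eq_zero.mp h').resolve_left (pow_ne_zero k hz)

theorem mem_spectrum_iff_exists_mulVec_eq_smul [DecidableEq n] {K : Type*} [Field K]
    (M : Matrix n n K) (z : K) : z ∈ spectrum K M ↔ ∃ x ≠ 0, M *ᵥ x = z • x := by
  rw [← spectrum_toLin', ← Module.End.hasEigenvalue_iff_mem_spectrum,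
    Module.End.hasEigenvalue_iff, Submodule.ne_bot_iff]
  simp only [Module.End.mem_eigenspace_iff, toLin'_apply]
  exact exists_congr fun _ => and_comm

end Matrix

/-- scalar-free (PBH-type) test for detectability: the pair `{A, C}` is
detectable iff there is no eigenpair `(λ, x)`, `x ≠ 0`, of the complexification of `A`
with `|λ| ≥ 1` and `C·x = 0`. -/
theorem stmt_18 (q p : ℕ) (A : Matrix (Fin q) (Fin q) ℝ) (C : Matrix (Fin p) (Fin q) ℝ) :
    (∃ K : Matrix (Fin q) (Fin p) ℝ,
      ∀ z ∈ spectrum ℂ ((A - K * C).map (Complex.ofReal : ℝ → ℂ)),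
        ‖z‖ < 1) ↔
    ¬ ∃ (lam : ℂ) (x : Fin q → ℂ), x ≠ 0 ∧
      (A.map (Complex.ofReal : ℝ → ℂ)).mulVec x = lam • x ∧
      1 ≤ ‖lam‖ ∧
      (C.map (Complex.ofReal : ℝ → ℂ)).mulVec x = 0 := by
  constructor
  · rintro ⟨K, hK⟩ ⟨lam, x, hx0, hAx, hlam, hCx⟩
    refine (hK lam ((mem_spectrum_iff_exists_mulVec_eq_smul _ _).mpr ⟨x, hx0, ?_⟩)).not_ge hlam
    exact (map_sub_mul_mulVec_of_mulVec_eq_zero Complex.ofRealHom hCx).trans hAx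
  · intro hnp
    obtain ⟨K, hK⟩ := exists_mul_pow_sub_mul_eq_zero A C
    refine ⟨K, fun z hz => not_le.mp fun hz1 => hnp ?_⟩
    obtain ⟨x, hx0, hzx⟩ := (mem_spectrum_iff_exists_mulVec_eq_smul _ _).mp hz
    have hCx := mulVec_eq_zero_of_mul_pow_eq_zero (map_mul_pow_eq_zero Complex.ofRealHom hK) hzx
      (norm_pos_iff.mp (one_pos.trans_le hz1))
    exact ⟨z, x, hx0, (map_sub_mul_mulVec_of_mulVec_eq_zero Complex.ofRealHom hCx).symm.trans hzx,
      hz1, hCx⟩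
end
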